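/- arXiv:2312.12803 — 7 statements merged into one kernel-verified Lean document; each statement's English description precedes it below -/
import Mathlib

section
/- Let F be a field, h ∈ F[x] with deg h = w ≥ 1, m₁ ≥ 1 an integer, and let R₁, …, R_{m₁} ∈ F[x] satisfy deg R_i < w for all i ∈ [m₁]. Set G(x) = Σ_{i=1}^{m₁} R_i(x)·h(x)^{i−1}. Then for every y ∈ F, the remainder of G upon division by h(x) − y equals Σ_{i=1}^{m₁} y^{i−1}·R_i(x). -/
open Polynomial

/- Modulo `h - y` the polynomial `h` reduces to the constant `y`, so `G` is congruent to
`∑ yⁱ Rᵢ`; the latter has degree `< deg h = deg (h - y)`, hence it is the remainder. -/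

theorem sub_C_dvd_sum_mul_pow_sub_sum_C_pow_mul {R : Type*} [CommRing R] (h : R[X]) (y : R)
    (P : ℕ → R[X]) (s : Finset ℕ) :
    h - C y ∣ ∑ i ∈ s, P i * h ^ i - ∑ i ∈ s, C (y ^ i) * P i := by
  rw [← Finset.sum_sub_distrib]
  refine Finset.dvd_sum fun i _ => ?_
  have hi : P i * h ^ i - C (y ^ i) * P i = P i * (h ^ i - C y ^ i) := by
    rw [C_pow]; ring
  exact hi ▸ (sub_dvd_pow_sub_pow h (C y) i).mul_left _

theorem degree_sum_C_mul_lt {R : Type*} [CommRing R] {n : ℕ} (c : ℕ → R) (P : ℕ → R[X])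
    (s : Finset ℕ) (hP : ∀ i ∈ s, (P i).degree < n) :
    (∑ i ∈ s, C (c i) * P i).degree < n := by
  rw [← mem_degreeLT]
  refine Submodule.sum_mem _ fun i hi => ?_
  rw [C_mul']
  exact Submodule.smul_mem _ _ (mem_degreeLT.mpr (hP i hi))

theorem mod_eq_of_dvd_sub_of_degree_lt {F : Type*} [Field F] {p q r : F[X]}
    (hdvd : q ∣ p - r) (hr : r.degree < q.degree) : p % q = r := by
  have hq : q ≠ 0 := ne_zero_of_degree_gt hr
  rw [mod_eq_of_dvd_sub hdvd, (mod_eq_self_iff hq).mpr hr]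

theorem tamo_barg_remainder_of_h_expansion_general
    (F : Type*) [Field F] (h : F[X]) (w m₁ : ℕ)
    (hdeg : h.natDegree = w) (hw : 1 ≤ w)
    (R : ℕ → F[X]) (hR : ∀ i, i < m₁ → (R i).degree < ((w : ℕ) : WithBot ℕ))
    (G : F[X]) (hG : G = ∑ i ∈ Finset.range m₁, R i * h ^ i) :
    ∀ y : F, G % (h - C y) = ∑ i ∈ Finset.range m₁, C (y ^ i) * R i := by
  intro y
  have hdegh : h.degree = w := degree_eq_iff_natDegree_eq_of_pos hw |>.mpr hdeg
  have hdeg_sub : (h - C y).degree = w := by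
    rw [degree_sub_C (by rw [hdegh]; exact_mod_cast hw), hdegh]
  subst hG
  refine mod_eq_of_dvd_sub_of_degree_lt (sub_C_dvd_sum_mul_pow_sub_sum_C_pow_mul h y R _) ?_
  rw [hdeg_sub]
  exact degree_sum_C_mul_lt _ R _ fun i hi => hR i (Finset.mem_range.mp hi)

/-- If `G = ∑_{i=1}^{m₁} R_i · h^{i-1}` with `deg R_i < w = deg h`, then for
every `y` the remainder of `G` upon division by `h - y` is `∑_{i=1}^{m₁} y^{i-1} · R_i`
(here indexed `i = 0, …, m₁-1`). -/
theorem tamo_barg_remainder_of_h_expansion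
    (F : Type*) [Field F] (h : F[X]) (w m₁ : ℕ)
    (hdeg : h.natDegree = w) (hw : 1 ≤ w) (hm₁ : 1 ≤ m₁)
    (R : ℕ → F[X]) (hR : ∀ i, i < m₁ → (R i).degree < ((w : ℕ) : WithBot ℕ))
    (G : F[X]) (hG : G = ∑ i ∈ Finset.range m₁, R i * h ^ i) :
    ∀ y : F, G % (h - C y) = ∑ i ∈ Finset.range m₁, C (y ^ i) * R i :=
  tamo_barg_remainder_of_h_expansion_general F h w m₁ hdeg hw R hR G hG
end

section
/- Let F be a field, h ∈ F[x] with deg h = w ≥ 1, let r be an integer with 0 ≤ r ≤ w, let m₁ ≥ 1 be an integer, and let G ∈ F[x] with deg G < m₁·w. Suppose y₁, …, y_{m₁} ∈ F are distinct elements such that deg(G mod (h − y_i)) < r for every i ∈ [m₁]. Then there exist polynomials H₀, H₁, …, H_{r−1} ∈ F[x], each of degree at most m₁ − 1, such that for every y ∈ F one has G mod (h(x) − y) = Σ_{j=0}^{r−1} H_j(y)·x^j; moreover, for every i ∈ [m₁] and every 0 ≤ j ≤ r − 1, H_j(y_i) equals the coefficient of x^j in G mod (h − y_i). -/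
/-!
Write `G = ∑_{k < m₁} g_k h^k` in base `h`, with `deg g_k < deg h`. Since `h ≡ y` modulo `h - y`
and `deg (h - y) = deg h`, the remainder is `G mod (h - y) = ∑_k y^k g_k` for every `y`, so its
`j`-th coefficient is `H_j(y)` for `H_j = ∑_k (g_k)_j X^k`, a polynomial of degree `< m₁`.
For `j ≥ r` the polynomial `H_j` vanishes at the `m₁` distinct points `y_i`, hence is zero.
-/

open Polynomial

namespace Polynomial

section Field

variable {F : Type*} [Field F]

theorem degree_div_lt_degree_pow {p h : F[X]} (hh : h ≠ 0) {n : ℕ}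
    (hp : p.degree < (h ^ (n + 1)).degree) : (p / h).degree < (h ^ n).degree := by
  by_cases hph : h.degree ≤ p.degree
  · rw [pow_succ', degree_mul, ← degree_add_div hh hph] at hp
    exact (WithBot.add_lt_add_iff_left (degree_ne_bot.mpr hh)).mp hp
  · rw [(Polynomial.div_eq_zero_iff hh).mpr (not_le.mp hph), degree_zero, bot_lt_iff_ne_bot,
      degree_ne_bot]
    exact pow_ne_zero n hh

theorem exists_eq_sum_mul_pow_of_degree_lt {h p : F[X]} (hh : h ≠ 0) {n : ℕ}
    (hp : p.degree < (h ^ n).degree) :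
    ∃ g : Fin n → F[X], (∀ k, (g k).degree < h.degree) ∧ p = ∑ k, g k * h ^ (k : ℕ) := by
  induction n generalizing p with
  | zero => exact ⟨Fin.elim0, fun k => k.elim0, by simpa using hp⟩
  | succ n ih =>
    obtain ⟨g, hg, hpg⟩ := ih (degree_div_lt_degree_pow hh hp)
    refine ⟨Fin.cons (p % h) g, Fin.cases (EuclideanDomain.mod_lt p hh) hg, ?_⟩
    have hsucc (k : Fin n) : g k * h ^ (k.succ : ℕ) = h * (g k * h ^ (k : ℕ)) := by
      rw [Fin.val_succ, pow_succ]
      ring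
    rw [Fin.sum_univ_succ]
    simp only [Fin.cons_zero, Fin.cons_succ, hsucc, ← Finset.mul_sum, ← hpg, Fin.val_zero,
      pow_zero, mul_one]
    exact (EuclideanDomain.mod_add_div p h).symm

theorem sum_mul_pow_mod_sub_C {n : ℕ} {g : Fin n → F[X]} {h : F[X]} (hh : 0 < h.degree)
    (hg : ∀ k, (g k).degree < h.degree) (z : F) :
    (∑ k, g k * h ^ (k : ℕ)) % (h - C z) = ∑ k : Fin n, C (z ^ (k : ℕ)) * g k := by
  have hdeg : (h - C z).degree = h.degree := degree_sub_C hh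
  have hne : h - C z ≠ 0 := ne_zero_of_degree_gt (hdeg ▸ hh)
  rw [mod_eq_of_dvd_sub (p₂ := ∑ k : Fin n, C (z ^ (k : ℕ)) * g k), mod_eq_self_iff hne, hdeg]
  · refine (degree_sum_le _ _).trans_lt ((Finset.sup_lt_iff (bot_lt_of_lt hh)).mpr ?_)
    intro k _
    rw [← smul_eq_C_mul]
    exact (degree_smul_le _ _).trans_lt (hg k)
  · rw [← Finset.sum_sub_distrib]
    refine Finset.dvd_sum fun k _ => ?_
    rw [C_pow, mul_comm, ← sub_mul]
    exact dvd_mul_of_dvd_left (sub_dvd_pow_sub_pow h (C z) k) _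

end Field

section CommSemiring

variable {R : Type*} [CommSemiring R] {n : ℕ}

noncomputable def digitCoeffPoly (g : Fin n → R[X]) (j : ℕ) : R[X] :=
  ∑ k, C ((g k).coeff j) * X ^ (k : ℕ)

theorem degree_digitCoeffPoly_lt (g : Fin n → R[X]) (j : ℕ) : (digitCoeffPoly g j).degree < n :=
  degree_sum_fin_lt _

theorem eval_digitCoeffPoly (g : Fin n → R[X]) (j : ℕ) (z : R) :
    (digitCoeffPoly g j).eval z = (∑ k : Fin n, C (z ^ (k : ℕ)) * g k).coeff j := by
  simp only [digitCoeffPoly, eval_finsetSum, finsetSum_coeff, eval_mul, eval_C, eval_pow, eval_X,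
    coeff_C_mul]
  exact Finset.sum_congr rfl fun k _ => mul_comm _ _

end CommSemiring

theorem degree_le_sub_one_of_degree_lt {R : Type*} [Semiring R] {p : R[X]} {n : ℕ}
    (hp : p.degree < n) : p.degree ≤ ((n - 1 : ℕ) : WithBot ℕ) := by
  rw [degree_lt_iff_coeff_zero] at hp
  rw [degree_le_iff_coeff_zero]
  intro m hm
  norm_cast at hm
  exact hp m (by omega)

end Polynomial

theorem tamo_barg_remainder_coefficients_general
    (F : Type*) [Field F] (h : F[X]) (w r m₁ : ℕ)
    (hdeg : h.natDegree = w) (hw : 1 ≤ w)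
    (G : F[X]) (hG : G.degree < ((m₁ * w : ℕ) : WithBot ℕ))
    (y : Fin m₁ → F) (hy : Function.Injective y)
    (hGmod : ∀ i : Fin m₁, (G % (h - C (y i))).degree < ((r : ℕ) : WithBot ℕ)) :
    ∃ H : ℕ → F[X],
      (∀ j, j < r → (H j).degree ≤ ((m₁ - 1 : ℕ) : WithBot ℕ)) ∧
      (∀ z : F, G % (h - C z) = ∑ j ∈ Finset.range r, C ((H j).eval z) * X ^ j) ∧
      (∀ i : Fin m₁, ∀ j, j < r → (H j).eval (y i) = (G % (h - C (y i))).coeff j) := by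
  subst hdeg
  have hh : 0 < h.degree := natDegree_pos_iff_degree_pos.mp hw
  have hGh : G.degree < (h ^ m₁).degree := by
    rwa [degree_eq_natDegree (pow_ne_zero _ (ne_zero_of_degree_gt hh)), natDegree_pow]
  obtain ⟨g, hg, hGg⟩ := exists_eq_sum_mul_pow_of_degree_lt (ne_zero_of_degree_gt hh) hGh
  have heval (z : F) (j : ℕ) : (digitCoeffPoly g j).eval z = (G % (h - C z)).coeff j := by
    rw [hGg, sum_mul_pow_mod_sub_C hh hg, eval_digitCoeffPoly]
  have hvanish (j : ℕ) (hj : r ≤ j) : digitCoeffPoly g j = 0 := by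
    refine eq_zero_of_degree_lt_of_eval_index_eq_zero Finset.univ hy.injOn
      (by simpa using degree_digitCoeffPoly_lt g j) fun i _ => ?_
    rw [heval]
    exact coeff_eq_zero_of_degree_lt ((hGmod i).trans_le (by exact_mod_cast hj))
  refine ⟨digitCoeffPoly g, fun j _ => degree_le_sub_one_of_degree_lt
    (degree_digitCoeffPoly_lt g j), fun z => ?_, fun i j _ => heval _ _⟩
  ext j
  rw [← heval, finsetSum_coeff]
  simp only [coeff_C_mul_X_pow, Finset.sum_ite_eq, Finset.mem_range]
  split_ifs with hj
  · rfl
  · rw [hvanish j (not_lt.mp hj), eval_zero]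

/-- Lemma 4 of the paper, remainder form. If `deg G < m₁·w` and the
remainders of `G` modulo `h - y_i` have degree `< r ≤ w = deg h` for `m₁` distinct `y_i`,
then there are polynomials `H_0, …, H_{r-1}` of degree `≤ m₁ - 1` such that for every `y`,
`G mod (h - y) = ∑_{j<r} H_j(y)·x^j`, and `H_j(y_i)` is the coefficient of `x^j` in
`G mod (h - y_i)`. -/
theorem tamo_barg_remainder_coefficients
    (F : Type*) [Field F] (h : F[X]) (w r m₁ : ℕ)
    (hdeg : h.natDegree = w) (hw : 1 ≤ w) (hr : r ≤ w) (hm₁ : 1 ≤ m₁)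
    (G : F[X]) (hG : G.degree < ((m₁ * w : ℕ) : WithBot ℕ))
    (y : Fin m₁ → F) (hy : Function.Injective y)
    (hGmod : ∀ i : Fin m₁, (G % (h - C (y i))).degree < ((r : ℕ) : WithBot ℕ)) :
    ∃ H : ℕ → F[X],
      (∀ j, j < r → (H j).degree ≤ ((m₁ - 1 : ℕ) : WithBot ℕ)) ∧
      (∀ z : F, G % (h - C z) = ∑ j ∈ Finset.range r, C ((H j).eval z) * X ^ j) ∧
      (∀ i : Fin m₁, ∀ j, j < r → (H j).eval (y i) = (G % (h - C (y i))).coeff j) :=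
  tamo_barg_remainder_coefficients_general F h w r m₁ hdeg hw G hG y hy hGmod
end

section
/- Assume the Tamo–Barg setup. Let G, G′ ∈ F[x] both have degree < m₁·w and satisfy deg(G mod (h − y_i)) < r and deg(G′ mod (h − y_i)) < r for all i ∈ [m₁]. Then for every i ∈ [m] and every r-element subset S ⊆ roots(y_i): if G(β) = G′(β) for all β ∈ S, then G(β) = G′(β) for all β ∈ roots(y_i). (That is, every code symbol of the Tamo–Barg code is determined by any r of the other symbols in its repair set roots(y_i), so all symbols have (r, w − r + 1)-locality.) -/
/-! Write `D = G - G'` in base `h` as `D = ∑_{k < m₁} a_k h^k` with `deg a_k < w`; then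
`D mod (h - y) = ∑_k a_k y^k` for every `y`, so each coefficient of this residue is a polynomial
in `y` of degree `< m₁`. In degrees `≥ r` it vanishes at the `m₁` distinct points `y_1, …, y_{m₁}`,
hence everywhere: `deg (D mod (h - y_i)) < r` for all `i ∈ [m]`, not only `i ≤ m₁`. On
`roots(y_i)` the polynomial `D` agrees with this residue, which vanishes on `S` with `|S| = r`,
so it is zero. -/

open Polynomial

namespace Polynomial

variable {K : Type*} [Field K]

theorem degree_div_lt_of_degree_lt_mul {p D : K[X]} {N : ℕ} (hp : p ≠ 0)
    (hD : D.degree < ((N + 1) * p.natDegree : ℕ)) :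
    (D / p).degree < (N * p.natDegree : ℕ) := by
  by_cases hDp : D / p = 0
  · rw [hDp, degree_zero]
    exact WithBot.bot_lt_coe _
  have hD0 : D ≠ 0 := by
    rintro rfl
    simp at hDp
  have hle : p.degree ≤ D.degree := by
    by_contra! hlt
    exact hDp ((Polynomial.div_eq_zero_iff hp).2 hlt)
  have hsum := degree_add_div hp hle
  rw [degree_eq_natDegree hp, degree_eq_natDegree hDp, degree_eq_natDegree hD0] at hsum
  rw [degree_eq_natDegree hD0] at hD
  rw [degree_eq_natDegree hDp]
  norm_cast at hsum hD ⊢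
  rw [add_one_mul] at hD
  omega

theorem exists_eq_sum_mul_pow {p : K[X]} (hp : p ≠ 0) :
    ∀ (N : ℕ) (D : K[X]), D.degree < (N * p.natDegree : ℕ) →
      ∃ a : Fin N → K[X], (∀ k, (a k).degree < p.degree) ∧ D = ∑ k, a k * p ^ (k : ℕ)
  | 0, D, hD => ⟨Fin.elim0, fun k => k.elim0, by simpa using hD⟩
  | N + 1, D, hD => by
    obtain ⟨a, ha, hQ⟩ :=
      exists_eq_sum_mul_pow hp N (D / p) (degree_div_lt_of_degree_lt_mul hp hD)
    refine ⟨Fin.cons (D % p) a, Fin.cases (degree_mod_lt D hp) ha, ?_⟩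
    rw [Fin.sum_univ_succ]
    simp only [Fin.cons_zero, Fin.cons_succ, Fin.val_zero, pow_zero, mul_one, Fin.val_succ,
      pow_succ']
    conv_lhs => rw [← EuclideanDomain.mod_add_div D p, hQ]
    simp only [Finset.mul_sum]
    congr 1
    exact Finset.sum_congr rfl fun k _ => by ring

theorem sum_mul_pow_mod_sub_C_s4 {p : K[X]} {N : ℕ} (hp : 0 < p.degree) (a : Fin N → K[X])
    (ha : ∀ k, (a k).degree < p.degree) (y : K) :
    (∑ k, a k * p ^ (k : ℕ)) % (p - C y) = ∑ k, a k * C (y ^ (k : ℕ)) := by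
  have hdvd : p - C y ∣ ∑ k, a k * p ^ (k : ℕ) - ∑ k, a k * C (y ^ (k : ℕ)) := by
    rw [← Finset.sum_sub_distrib]
    refine Finset.dvd_sum fun k _ => ?_
    rw [← mul_sub, C_pow]
    exact dvd_mul_of_dvd_right (sub_dvd_pow_sub_pow _ _ _) _
  have hdeg : (∑ k, a k * C (y ^ (k : ℕ))).degree < (p - C y).degree := by
    rw [degree_sub_C hp]
    refine (degree_sum_le _ _).trans_lt ((Finset.sup_lt_iff (bot_lt_of_lt hp)).2 fun k _ => ?_)
    rw [mul_comm, ← smul_eq_C_mul]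
    exact (degree_smul_le _ _).trans_lt (ha k)
  rw [mod_eq_of_dvd_sub hdvd, (mod_eq_self_iff (ne_zero_of_degree_gt hdeg)).2 hdeg]

theorem coeff_sum_mul_C_pow {N : ℕ} (a : Fin N → K[X]) (y : K) (t : ℕ) :
    (∑ k, a k * C (y ^ (k : ℕ))).coeff t = (∑ k, C ((a k).coeff t) * X ^ (k : ℕ)).eval y := by
  simp only [finsetSum_coeff, eval_finsetSum, coeff_mul_C, eval_mul, eval_C, eval_pow, eval_X,
    mul_comm]

theorem degree_mod_sub_C_lt_of_forall_mem {p D : K[X]} {N r : ℕ} (hp : 0 < p.degree)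
    (hD : D.degree < (N * p.natDegree : ℕ)) {Y : Finset K} (hY : N ≤ Y.card)
    (hres : ∀ y ∈ Y, (D % (p - C y)).degree < r) (y : K) : (D % (p - C y)).degree < r := by
  obtain ⟨a, ha, rfl⟩ := exists_eq_sum_mul_pow (ne_zero_of_degree_gt hp) N D hD
  simp only [sum_mul_pow_mod_sub_C_s4 hp a ha] at hres ⊢
  rw [degree_lt_iff_coeff_zero]
  intro t ht
  have hcoeff : ∑ k, C ((a k).coeff t) * X ^ (k : ℕ) = 0 := by
    refine eq_zero_of_degree_lt_of_eval_finset_eq_zero Y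
      ((degree_sum_fin_lt _).trans_le (by exact_mod_cast hY)) fun z hz => ?_
    rw [← coeff_sum_mul_C_pow]
    exact coeff_eq_zero_of_degree_lt ((hres z hz).trans_le (by exact_mod_cast ht))
  rw [coeff_sum_mul_C_pow, hcoeff, eval_zero]

theorem eval_eq_zero_of_isRoot_of_degree_mod_lt {f q : K[X]} {S : Finset K}
    (hS : ∀ β ∈ S, q.IsRoot β) (hf : ∀ β ∈ S, f.eval β = 0) (hdeg : (f % q).degree < S.card)
    {β : K} (hβ : q.IsRoot β) : f.eval β = 0 := by
  have eval_mod : ∀ {γ}, q.IsRoot γ → (f % q).eval γ = f.eval γ := fun hγ => by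
    conv_rhs => rw [← EuclideanDomain.div_add_mod f q]
    rw [eval_add, eval_mul, hγ.eq_zero, zero_mul, zero_add]
  have hmod : f % q = 0 := eq_zero_of_degree_lt_of_eval_finset_eq_zero S hdeg fun γ hγ =>
    (eval_mod (hS γ hγ)).trans (hf γ hγ)
  rw [← eval_mod hβ, hmod, eval_zero]

end Polynomial

theorem tamo_barg_locality_general
    (F : Type*) [Field F] [DecidableEq F]
    (h : F[X]) (w r m₁ m₂ m : ℕ)
    (hm : m = m₁ + m₂)
    (hdeg : h.natDegree = w) (hw : 1 ≤ w)
    (y : Fin m → F) (hy : Function.Injective y)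
    (G G' : F[X])
    (hG : G.degree < ((m₁ * w : ℕ) : WithBot ℕ))
    (hG' : G'.degree < ((m₁ * w : ℕ) : WithBot ℕ))
    (hGmod : ∀ i : Fin m, (i : ℕ) < m₁ → (G % (h - C (y i))).degree < ((r : ℕ) : WithBot ℕ))
    (hG'mod : ∀ i : Fin m, (i : ℕ) < m₁ → (G' % (h - C (y i))).degree < ((r : ℕ) : WithBot ℕ)) :
    ∀ i : Fin m, ∀ S ⊆ (h - C (y i)).roots.toFinset, S.card = r →
      (∀ β ∈ S, G.eval β = G'.eval β) →
      ∀ β ∈ (h - C (y i)).roots.toFinset, G.eval β = G'.eval β := by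
  intro i S hS hScard hagree β hβ
  have hh : 0 < h.degree := natDegree_pos_iff_degree_pos.1 (by omega)
  have hD : (G - G').degree < (m₁ * h.natDegree : ℕ) :=
    hdeg ▸ (degree_sub_le G G').trans_lt (max_lt hG hG')
  have hm₁ : m₁ ≤ m := by omega
  set Y := Finset.univ.map ((Fin.castLEEmb hm₁).trans ⟨y, hy⟩)
  have hY : m₁ ≤ Y.card := by simp [Y]
  have hres : ∀ z ∈ Y, ((G - G') % (h - C z)).degree < r := by
    simp only [Y, Finset.mem_map, Finset.mem_univ, true_and]
    rintro _ ⟨j, rfl⟩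
    rw [sub_mod]
    exact (degree_sub_le _ _).trans_lt (max_lt (hGmod _ j.2) (hG'mod _ j.2))
  have isRoot_of_mem {γ} (hγ : γ ∈ (h - C (y i)).roots.toFinset) : (h - C (y i)).IsRoot γ :=
    (mem_roots'.1 (Multiset.mem_toFinset.1 hγ)).2
  rw [← sub_eq_zero, ← eval_sub]
  refine eval_eq_zero_of_isRoot_of_degree_mod_lt (fun γ hγ => isRoot_of_mem (hS hγ))
    (fun γ hγ => by rw [eval_sub, hagree γ hγ, sub_self]) ?_ (isRoot_of_mem hβ)
  rw [hScard]
  exact degree_mod_sub_C_lt_of_forall_mem hh hD hY hres (y i)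

/-- In the Tamo–Barg setup, every code symbol is determined by any `r`
of the other symbols in its repair set `roots(y_i)`: if two admissible polynomials
`G, G'` agree on some `r`-element subset of `roots(y_i)`, they agree on all of
`roots(y_i)`. -/
theorem tamo_barg_locality
    (F : Type*) [Field F] [Fintype F] [DecidableEq F]
    (h : F[X]) (w r m₁ m₂ m : ℕ)
    (hm : m = m₁ + m₂) (hm₁ : 1 ≤ m₁) (hm₂ : 0 ≤ m₂)
    (hdeg : h.natDegree = w) (hw : 1 ≤ w) (hr0 : 0 < r) (hrw : r < w)
    (y : Fin m → F) (hy : Function.Injective y)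
    (hroots : ∀ i : Fin m, ((h - C (y i)).roots.toFinset).card = w)
    (G G' : F[X])
    (hG : G.degree < ((m₁ * w : ℕ) : WithBot ℕ))
    (hG' : G'.degree < ((m₁ * w : ℕ) : WithBot ℕ))
    (hGmod : ∀ i : Fin m, (i : ℕ) < m₁ → (G % (h - C (y i))).degree < ((r : ℕ) : WithBot ℕ))
    (hG'mod : ∀ i : Fin m, (i : ℕ) < m₁ → (G' % (h - C (y i))).degree < ((r : ℕ) : WithBot ℕ)) :
    ∀ i : Fin m, ∀ S ⊆ (h - C (y i)).roots.toFinset, S.card = r →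
      (∀ β ∈ S, G.eval β = G'.eval β) →
      ∀ β ∈ (h - C (y i)).roots.toFinset, G.eval β = G'.eval β :=
  tamo_barg_locality_general F h w r m₁ m₂ m hm hdeg hw y hy G G' hG hG' hGmod hG'mod
end

section
/- Assume the Tamo–Barg setup. Then the Tamo–Barg code has exactly q^{m₁·r} codewords, and any two distinct codewords differ in at least (m₂ + 1)·w − r + 1 of the n = m·w coordinates; i.e., it is a q-ary code of length n = m·w, size q^{m₁·r}, and minimum Hamming distance at least (m₂ + 1)·w − r + 1. -/
/-!
Every `G = ∑_{b < m₁} g_b h^b` with `deg g_b < r` is admissible: its degree is below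
`(m₁ - 1) w + r ≤ m₁ w`, and modulo `h - y_i` it reduces to `∑_b y_i^b g_b`, of degree `< r`.
These `h`-adic expansions are unique, so there are `q^{m₁ r}` of them, and they exhaust the
admissible polynomials, since an admissible polynomial is determined by its `m₁` remainders of
degree `< r` (the moduli have `m₁ w` distinct roots). Evaluation on the `m w` points of `Γ` is
injective in degree `< m₁ w`, and two distinct codewords, whose difference is again an `h`-adic
expansion, agree on fewer than `(m₁ - 1) w + r` points.
-/

open Polynomial

namespace Polynomial

variable {F : Type*} [Field F]

section Fibres

variable [DecidableEq F] {h : F[X]}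

lemma disjoint_roots_sub_C (hh : 0 < h.degree) {a b : F} (hab : a ≠ b) :
    Disjoint (h - C a).roots.toFinset (h - C b).roots.toFinset := by
  rw [Finset.disjoint_left]
  intro x hxa hxb
  rw [Multiset.mem_toFinset, mem_roots_sub_C hh] at hxa hxb
  exact hab (hxa.symm.trans hxb)

variable {ι : Type*} {s : Finset ι} {y : ι → F} {w : ℕ}

lemma card_biUnion_roots_sub_C (hh : 0 < h.degree) (hy : Set.InjOn y s)
    (hroots : ∀ i ∈ s, (h - C (y i)).roots.toFinset.card = w) :
    (s.biUnion fun i => (h - C (y i)).roots.toFinset).card = s.card * w := by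
  rw [Finset.card_biUnion fun i hi j hj hij => disjoint_roots_sub_C hh (hy.ne hi hj hij),
    Finset.sum_congr rfl hroots, Finset.sum_const, smul_eq_mul]

/-- Uniqueness in the Chinese remainder theorem for the moduli `h - y i`, seen through their
`|s|·w` distinct roots. -/
lemma eq_of_forall_mod_sub_C_eq (hh : 0 < h.degree) (hy : Set.InjOn y s)
    (hroots : ∀ i ∈ s, (h - C (y i)).roots.toFinset.card = w) {G₁ G₂ : F[X]}
    (hdeg : (G₁ - G₂).degree < ↑(s.card * w))
    (hmod : ∀ i ∈ s, G₁ % (h - C (y i)) = G₂ % (h - C (y i))) : G₁ = G₂ := by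
  refine eq_of_degree_sub_lt_of_eval_finset_eq (s.biUnion fun i => (h - C (y i)).roots.toFinset)
    (by rwa [card_biUnion_roots_sub_C hh hy hroots]) fun β hβ => ?_
  obtain ⟨i, hi, hβi⟩ := Finset.mem_biUnion.mp hβ
  have hdvd : h - C (y i) ∣ G₁ - G₂ := by
    rw [← EuclideanDomain.mod_eq_zero, sub_mod, hmod i hi, sub_self]
  have hroot : (h - C (y i)).eval β = 0 := by
    rw [eval_sub, eval_C, sub_eq_zero, ← mem_roots_sub_C hh, ← Multiset.mem_toFinset]
    exact hβi
  rw [← sub_eq_zero, ← eval_sub]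
  exact eval_eq_zero_of_dvd_of_eval_eq_zero hdvd hroot

end Fibres

lemma card_sub_natDegree_le_hammingDist [DecidableEq F] (S : Finset F) {p q : F[X]}
    (hpq : p ≠ q) :
    S.card - (p - q).natDegree ≤
      hammingDist (fun β : S => p.eval β.1) (fun β : S => q.eval β.1) := by
  have hsplit := Finset.card_filter_add_card_filter_not
    (s := Finset.univ) (fun β : S => p.eval β.1 = q.eval β.1)
  rw [Finset.card_univ, Fintype.card_coe] at hsplit
  set agree := Finset.univ.filter fun β : S => p.eval β.1 = q.eval β.1
  have hagree : agree.card ≤ (p - q).natDegree := by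
    rw [← Finset.card_map (Function.Embedding.subtype _)]
    refine card_le_degree_of_subset_roots fun x hx => ?_
    obtain ⟨β, hβ, rfl⟩ := Finset.mem_map.mp hx
    rw [mem_roots (sub_ne_zero.mpr hpq), IsRoot.def, eval_sub, sub_eq_zero]
    exact (Finset.mem_filter.mp hβ).2
  simp only [hammingDist, ne_eq]
  omega

section HAdic

variable {h : F[X]}

lemma eq_zero_of_sum_mul_pow_eq_zero :
    ∀ {k : ℕ} (g : Fin k → F[X]), (∀ b, (g b).degree < h.degree) →
      ∑ b, g b * h ^ (b : ℕ) = 0 → ∀ b, g b = 0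
  | 0, _, _, _, b => b.elim0
  | k + 1, g, hg, hsum, b => by
    have hh : h ≠ 0 := fun h0 => by simpa [h0] using hg 0
    have hsplit : g 0 + h * ∑ b : Fin k, g b.succ * h ^ (b : ℕ) = 0 := by
      rw [← hsum, Fin.sum_univ_succ, Finset.mul_sum]
      simp only [Fin.val_zero, pow_zero, mul_one, Fin.val_succ, pow_succ]
      exact congrArg _ (Finset.sum_congr rfl fun b _ => by ring)
    have hg0 : g 0 = 0 := eq_zero_of_dvd_of_degree_lt
      ⟨-∑ b : Fin k, g b.succ * h ^ (b : ℕ), by linear_combination hsplit⟩ (hg 0)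
    rw [hg0, zero_add, mul_eq_zero, or_iff_right hh] at hsplit
    have hsucc := eq_zero_of_sum_mul_pow_eq_zero (fun b => g b.succ) (fun b => hg _) hsplit
    exact Fin.cases hg0 hsucc b

lemma degree_mul_pow_lt {g : F[X]} {r : ℕ} (hg : g.degree < r) (b : ℕ) :
    (g * h ^ b).degree < ↑(b * h.natDegree + r) := by
  obtain rfl | hg0 := eq_or_ne g 0
  · rw [zero_mul, degree_zero]
    exact WithBot.bot_lt_coe _
  have hgr := (natDegree_lt_iff_degree_lt hg0).2 hg
  refine degree_le_natDegree.trans_lt (Nat.cast_lt.2 ?_)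
  calc (g * h ^ b).natDegree ≤ g.natDegree + (h ^ b).natDegree := natDegree_mul_le
    _ ≤ g.natDegree + b * h.natDegree := by gcongr; exact natDegree_pow_le
    _ < b * h.natDegree + r := by omega

variable (h) in
noncomputable def hAdicExpansion (k r : ℕ) : (Fin k → degreeLT F r) →ₗ[F] F[X] where
  toFun g := ∑ b, (g b : F[X]) * h ^ (b : ℕ)
  map_add' g g' := by
    simp only [Pi.add_apply, Submodule.coe_add, add_mul, Finset.sum_add_distrib]
  map_smul' c g := by
    simp only [Pi.smul_apply, Submodule.coe_smul, smul_mul_assoc, Finset.smul_sum,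
      RingHom.id_apply]

variable {k r : ℕ}

lemma hAdicExpansion_apply (g : Fin k → degreeLT F r) :
    hAdicExpansion h k r g = ∑ b, (g b : F[X]) * h ^ (b : ℕ) := rfl

lemma hAdicExpansion_injective (hr : (r : WithBot ℕ) ≤ h.degree) :
    Function.Injective (hAdicExpansion h k r) := by
  refine (injective_iff_map_eq_zero _).2 fun g hg => ?_
  ext1 b
  exact Subtype.ext <| eq_zero_of_sum_mul_pow_eq_zero (fun b => (g b : F[X]))
    (fun b => (mem_degreeLT.1 (g b).2).trans_le hr) hg b

lemma range_hAdicExpansion_le_degreeLT :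
    LinearMap.range (hAdicExpansion h k r) ≤ degreeLT F ((k - 1) * h.natDegree + r) := by
  rintro _ ⟨g, rfl⟩
  rw [hAdicExpansion_apply]
  refine Submodule.sum_mem _ fun b _ => mem_degreeLT.2 <|
    (degree_mul_pow_lt (mem_degreeLT.1 (g b).2) b).trans_le <| Nat.cast_le.2 ?_
  gcongr
  omega

lemma sum_pow_smul_mem_degreeLT (g : Fin k → degreeLT F r) (c : F) :
    ∑ b : Fin k, c ^ (b : ℕ) • (g b : F[X]) ∈ degreeLT F r :=
  Submodule.sum_mem _ fun b _ => Submodule.smul_mem _ _ (g b).2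

lemma card_fun_degreeLT [Finite F] : Nat.card (Fin k → degreeLT F r) = Nat.card F ^ (k * r) := by
  rw [Nat.card_congr (Equiv.piCongrRight fun _ => (degreeLTEquiv F r).toEquiv), Nat.card_fun,
    Nat.card_fun, Nat.card_eq_fintype_card (α := Fin r), Nat.card_eq_fintype_card (α := Fin k),
    Fintype.card_fin, Fintype.card_fin, ← pow_mul, mul_comm]

lemma hAdicExpansion_mod_sub_C (hh : 0 < h.degree) (hr : (r : WithBot ℕ) ≤ h.degree)
    (g : Fin k → degreeLT F r) (c : F) :
    hAdicExpansion h k r g % (h - C c) = ∑ b : Fin k, c ^ (b : ℕ) • (g b : F[X]) := by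
  rw [mod_eq_of_dvd_sub (q := h - C c) (p₂ := ∑ b : Fin k, c ^ (b : ℕ) • (g b : F[X])),
    mod_eq_self_iff (ne_zero_of_degree_gt (hh.trans_le (degree_sub_C hh).ge)), degree_sub_C hh]
  · exact (mem_degreeLT.1 (sum_pow_smul_mem_degreeLT g c)).trans_le hr
  rw [hAdicExpansion_apply, ← Finset.sum_sub_distrib]
  refine Finset.dvd_sum fun b _ => ?_
  rw [smul_eq_C_mul, C_pow, mul_comm (C c ^ _), ← mul_sub]
  exact (sub_dvd_pow_sub_pow h (C c) b).mul_left _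

lemma card_add_one_sub_le_hammingDist_of_mem_range [DecidableEq F] (S : Finset F)
    {G₁ G₂ : F[X]} (hG₁ : G₁ ∈ LinearMap.range (hAdicExpansion h k r))
    (hG₂ : G₂ ∈ LinearMap.range (hAdicExpansion h k r)) (hG : G₁ ≠ G₂) :
    S.card + 1 - ((k - 1) * h.natDegree + r) ≤
      hammingDist (fun β : S => G₁.eval β.1) (fun β : S => G₂.eval β.1) := by
  have hsub := range_hAdicExpansion_le_degreeLT (Submodule.sub_mem _ hG₁ hG₂)
  have hsmall := (natDegree_lt_iff_degree_lt (sub_ne_zero.2 hG)).2 (mem_degreeLT.1 hsub)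
  have := card_sub_natDegree_le_hammingDist S hG
  omega

end HAdic

end Polynomial

section TamoBarg

variable {F : Type*} [Field F] {h : F[X]} {m m₁ w r : ℕ} {y : Fin m → F}

def tamoBargPolynomials (h : F[X]) (y : Fin m → F) (m₁ w r : ℕ) : Set F[X] :=
  {G | G.degree < ((m₁ * w : ℕ) : WithBot ℕ) ∧
    ∀ i : Fin m, (i : ℕ) < m₁ → (G % (h - C (y i))).degree < ((r : ℕ) : WithBot ℕ)}

lemma range_hAdicExpansion_subset_tamoBargPolynomials (hdeg : h.degree = w) (hrw : r < w)
    (hm₁ : 1 ≤ m₁) :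
    Set.range (hAdicExpansion h m₁ r) ⊆ tamoBargPolynomials h y m₁ w r := by
  have hh : 0 < h.degree := by rw [hdeg]; exact_mod_cast (by omega : 0 < w)
  have hr : (r : WithBot ℕ) ≤ h.degree := by rw [hdeg]; exact_mod_cast hrw.le
  rintro _ ⟨g, rfl⟩
  refine ⟨(mem_degreeLT.1 (range_hAdicExpansion_le_degreeLT ⟨g, rfl⟩)).trans_le ?_,
    fun i _ => ?_⟩
  · rw [natDegree_eq_of_degree_eq_some hdeg, Nat.cast_le]
    obtain ⟨k, rfl⟩ : ∃ k, m₁ = k + 1 := ⟨m₁ - 1, by omega⟩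
    rw [Nat.add_sub_cancel, add_mul, one_mul]
    omega
  · rw [hAdicExpansion_mod_sub_C hh hr g (y i)]
    exact mem_degreeLT.1 (sum_pow_smul_mem_degreeLT g (y i))

lemma injOn_eval_tamoBargPolynomials (S : Finset F) (hS : m₁ * w ≤ S.card) :
    Set.InjOn (fun (G : F[X]) (β : S) => G.eval β.1) (tamoBargPolynomials h y m₁ w r) := by
  have hle : ((m₁ * w : ℕ) : WithBot ℕ) ≤ S.card := by exact_mod_cast hS
  exact fun G₁ hG₁ G₂ hG₂ hG => eq_of_degrees_lt_of_eval_finset_eq S (hG₁.1.trans_le hle)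
    (hG₂.1.trans_le hle) fun β hβ => congrFun hG ⟨β, hβ⟩

/-- The remainders modulo `h - y i`, `i < m₁`, determine a polynomial of degree `< m₁ w`;
counting them shows that the `h`-adic expansions already exhaust the Tamo–Barg polynomials. -/
theorem tamoBargPolynomials_eq_range [Finite F] [DecidableEq F] (hdeg : h.degree = w)
    (hrw : r < w) (hm₁ : 1 ≤ m₁) (hm₁m : m₁ ≤ m) (hy : Function.Injective y)
    (hroots : ∀ i, (h - C (y i)).roots.toFinset.card = w) :
    tamoBargPolynomials h y m₁ w r = Set.range (hAdicExpansion h m₁ r) := by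
  have hh : 0 < h.degree := by rw [hdeg]; exact_mod_cast (by omega : 0 < w)
  have : Finite (degreeLT F r) := Finite.of_equiv _ (degreeLTEquiv F r).toEquiv.symm
  let remainders : tamoBargPolynomials h y m₁ w r → Fin m₁ → degreeLT F r :=
    fun G i => ⟨G.1 % (h - C (y (Fin.castLE hm₁m i))), mem_degreeLT.2 (G.2.2 _ i.2)⟩
  have hinj : Function.Injective remainders := by
    intro G₁ G₂ hG
    refine Subtype.ext <| eq_of_forall_mod_sub_C_eq (s := Finset.univ.map (Fin.castLEEmb hm₁m))
      hh hy.injOn (fun i _ => hroots i) ?_ ?_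
    · rw [Finset.card_map, Finset.card_univ, Fintype.card_fin]
      exact (degree_sub_le _ _).trans_lt (max_lt G₁.2.1 G₂.2.1)
    · simp only [Finset.mem_map, Finset.mem_univ, true_and]
      rintro _ ⟨i, rfl⟩
      exact congrArg Subtype.val (congrFun hG i)
  have : Finite (tamoBargPolynomials h y m₁ w r) := Finite.of_injective _ hinj
  refine (Set.eq_of_subset_of_ncard_le
    (range_hAdicExpansion_subset_tamoBargPolynomials hdeg hrw hm₁) ?_ (Set.toFinite _)).symm
  rw [← Nat.card_coe_set_eq, ← Nat.card_coe_set_eq, Nat.card_range_of_injective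
    (hAdicExpansion_injective (by rw [hdeg]; exact_mod_cast hrw.le))]
  exact Nat.card_le_card_of_injective _ hinj

end TamoBarg

theorem tamo_barg_code_parameters_general
    (F : Type*) [Field F] [Fintype F] [DecidableEq F]
    (h : F[X]) (w r m₁ m₂ m : ℕ)
    (hm : m = m₁ + m₂) (hm₁ : 1 ≤ m₁)
    (hdeg : h.natDegree = w) (hrw : r < w)
    (y : Fin m → F) (hy : Function.Injective y)
    (hroots : ∀ i : Fin m, ((h - C (y i)).roots.toFinset).card = w) :
    let Γ : Finset F := Finset.univ.biUnion fun i : Fin m => (h - C (y i)).roots.toFinset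
    let Code : Set (↥Γ → F) :=
      {c | ∃ G : F[X], G.degree < ((m₁ * w : ℕ) : WithBot ℕ) ∧
        (∀ i : Fin m, (i : ℕ) < m₁ →
          (G % (h - C (y i))).degree < ((r : ℕ) : WithBot ℕ)) ∧
        c = fun β => G.eval β.1}
    Γ.card = m * w ∧
    Nat.card Code = Fintype.card F ^ (m₁ * r) ∧
    ∀ c₁ ∈ Code, ∀ c₂ ∈ Code, c₁ ≠ c₂ →
      (m₂ + 1) * w - r + 1 ≤ hammingDist c₁ c₂ := by
  intro Γ Code
  have hdeg' : h.degree = w := (degree_eq_iff_natDegree_eq_of_pos (by omega)).2 hdeg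
  have hh : 0 < h.degree := by rw [hdeg']; exact_mod_cast (by omega : 0 < w)
  have hΓ : Γ.card = m * w := by
    rw [card_biUnion_roots_sub_C hh hy.injOn fun i _ => hroots i, Finset.card_univ,
      Fintype.card_fin]
  have hU := tamoBargPolynomials_eq_range hdeg' hrw hm₁ (by omega) hy hroots
  have hCode :
      Code = (fun (G : F[X]) (β : Γ) => G.eval β.1) '' tamoBargPolynomials h y m₁ w r :=
    Set.ext fun c => by
      simp only [Code, tamoBargPolynomials, Set.mem_image, Set.mem_ofPred_eq, and_assoc, eq_comm]
  refine ⟨hΓ, ?_, ?_⟩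
  · rw [hCode, Nat.card_image_of_injOn (injOn_eval_tamoBargPolynomials Γ <| by
      rw [hΓ]; exact Nat.mul_le_mul_right w (by omega)), hU, Nat.card_range_of_injective
      (hAdicExpansion_injective (by rw [hdeg']; exact_mod_cast hrw.le)), card_fun_degreeLT,
      Nat.card_eq_fintype_card]
  rw [hCode, hU]
  rintro _ ⟨G₁, hG₁, rfl⟩ _ ⟨G₂, hG₂, rfl⟩ hne
  have hdist := card_add_one_sub_le_hammingDist_of_mem_range Γ hG₁ hG₂ <| by
    rintro rfl; exact hne rfl
  have hmw : m * w = (m₁ - 1) * w + (m₂ + 1) * w := by rw [hm, ← add_mul]; congr 1; omega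
  have hw : w ≤ (m₂ + 1) * w := Nat.le_mul_of_pos_left w m₂.succ_pos
  rw [hΓ, hmw, hdeg] at hdist
  dsimp only
  generalize (m₂ + 1) * w = B at *
  omega

/-- parameters of the Tamo–Barg code. The Tamo–Barg code is a `q`-ary
code of length `n = m·w`, size `q^{m₁·r}`, and minimum Hamming distance at least
`(m₂+1)·w - r + 1`. -/
theorem tamo_barg_code_parameters
    (F : Type*) [Field F] [Fintype F] [DecidableEq F]
    (h : F[X]) (w r m₁ m₂ m : ℕ)
    (hm : m = m₁ + m₂) (hm₁ : 1 ≤ m₁) (hm₂ : 0 ≤ m₂)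
    (hdeg : h.natDegree = w) (hw : 1 ≤ w) (hr0 : 0 < r) (hrw : r < w)
    (y : Fin m → F) (hy : Function.Injective y)
    (hroots : ∀ i : Fin m, ((h - C (y i)).roots.toFinset).card = w) :
    let Γ : Finset F := Finset.univ.biUnion fun i : Fin m => (h - C (y i)).roots.toFinset
    let Code : Set (↥Γ → F) :=
      {c | ∃ G : F[X], G.degree < ((m₁ * w : ℕ) : WithBot ℕ) ∧
        (∀ i : Fin m, (i : ℕ) < m₁ →
          (G % (h - C (y i))).degree < ((r : ℕ) : WithBot ℕ)) ∧
        c = fun β => G.eval β.1}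
    Γ.card = m * w ∧
    Nat.card Code = Fintype.card F ^ (m₁ * r) ∧
    ∀ c₁ ∈ Code, ∀ c₂ ∈ Code, c₁ ≠ c₂ →
      (m₂ + 1) * w - r + 1 ≤ hammingDist c₁ c₂ :=
  tamo_barg_code_parameters_general F h w r m₁ m₂ m hm hm₁ hdeg hrw y hy hroots
end

section
/- Let C be an (N, K, k = Kr; L, δ)-RASL code over 𝔽_q in which each column is a repair set with (r, L − r + 1)-locality, where 0 < r ≤ L − 1, and let D be an integer with K ≤ D ≤ N − 1. Then for every i ∈ [N], every D-subset R ⊆ [N]∖{i}, and every repair scheme over 𝔽_q that recovers column i from the helper columns indexed by R — i.e., natural numbers (b_t)_{t∈R}, functions φ_t : 𝔽_q^L → 𝔽_q^{b_t} for t ∈ R, and a function Φ with c_i = Φ((φ_t(c_t))_{t∈R}) for every codeword c ∈ C — the total download satisfies Σ_{t∈R} b_t ≥ D·r/(D − K + 1). -/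
/-!
Fix `r` positions `T` of a column; by locality they determine the column. If `A ⊆ R` has
`D - K + 1` helpers, the `K - 1` helpers of `R \ A` restricted to `T`, together with the messages
of `A`, determine all messages, hence column `i`, hence `K` columns and so the codeword. Counting
gives `q^(K r) ≤ q^((K - 1) r + ∑_A b)`, i.e. every `(D - K + 1)`-subset of `R` downloads at
least `r` symbols, and averaging over such subsets gives `D r ≤ (D - K + 1) ∑_R b`.
-/

open Finset

theorem Finset.card_nsmul_le_nsmul_sum_of_forall_card_eq {α M : Type*} [AddCommMonoid M]
    [PartialOrder M] [IsOrderedAddMonoid M] {s : Finset α} {m : ℕ} {f : α → M} {r : M}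
    (hm : m ≤ #s) (h : ∀ A ⊆ s, #A = m → r ≤ ∑ x ∈ A, f x) :
    #s • r ≤ m • ∑ x ∈ s, f x := by
  obtain hs | hs := (#s).eq_zero_or_pos
  · simp [card_eq_zero.mp hs]
  classical
  have : NeZero #s := ⟨hs.ne'⟩
  -- Average over the `#s` cyclic windows `{j, j + 1, …, j + m - 1}` of `ZMod #s ≃ s`.
  let e : ZMod #s ≃ s := Fintype.equivOfCardEq (by simp)
  let w : ZMod #s → ℕ → α := fun j x => e (j + x)
  have hw_inj : ∀ j, Set.InjOn (w j) (range m) := by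
    intro j x hx y hy hxy
    have hcast : (x : ZMod #s) = y := add_left_cancel (e.injective (Subtype.ext hxy))
    rw [ZMod.natCast_eq_natCast_iff', Nat.mod_eq_of_lt, Nat.mod_eq_of_lt] at hcast
    all_goals simp only [coe_range, Set.mem_Iio] at hx hy; omega
  have hw_sum : ∀ j, r ≤ ∑ x ∈ range m, f (w j x) := by
    intro j
    rw [← sum_image (hw_inj j)]
    refine h _ ?_ ?_
    · simp [subset_iff, w]
    · rw [card_image_of_injOn (hw_inj j), card_range]
  calc #s • r = ∑ _j : ZMod #s, r := by simp
    _ ≤ ∑ j, ∑ x ∈ range m, f (w j x) := sum_le_sum fun j _ => hw_sum j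
    _ = ∑ x ∈ range m, ∑ j, f (w j x) := sum_comm
    _ = ∑ _x ∈ range m, ∑ t ∈ s, f t := sum_congr rfl fun x _ =>
          (Equiv.sum_comp (Equiv.addRight (x : ZMod #s)) fun j => f (e j)).trans
            ((e.sum_comp fun t => f t).trans (sum_coe_sort s f))
    _ = m • ∑ t ∈ s, f t := by simp

section RepairScheme

variable {F : Type*} {N L : ℕ} {C : Set (Fin N → Fin L → F)} {K : ℕ} {T : Finset (Fin L)}
  {i : Fin N} {R A : Finset (Fin N)} {b : Fin N → ℕ}
  {φ : (t : Fin N) → (Fin L → F) → (Fin (b t) → F)}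
  {Φ : ((t : ↥R) → (Fin (b (t : Fin N)) → F)) → (Fin L → F)}

theorem injOn_restrict_prod_messages
    (hMDS : ∀ c₁ ∈ C, ∀ c₂ ∈ C, ∀ S : Finset (Fin N), #S = K →
      (∀ j ∈ S, c₁ j = c₂ j) → c₁ = c₂)
    (hloc : ∀ c₁ ∈ C, ∀ c₂ ∈ C, ∀ j : Fin N, (∀ p ∈ T, c₁ j p = c₂ j p) → c₁ j = c₂ j)
    (hΦ : ∀ c ∈ C, c i = Φ (fun t => φ t (c t))) (hiR : i ∉ R)
    (hK : #(R \ A) + 1 = K) :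
    Set.InjOn (fun c => ((fun (t : ↥(R \ A)) (p : ↥T) => c t p, fun t : ↥A => φ t (c t)) :
      ((↥(R \ A) → ↥T → F) × ((t : ↥A) → Fin (b t) → F)))) C := by
  intro c₁ hc₁ c₂ hc₂ h
  obtain ⟨hpos, hmsg⟩ := Prod.mk.inj h
  have hcols : ∀ t ∈ R \ A, c₁ t = c₂ t := fun t ht =>
    hloc c₁ hc₁ c₂ hc₂ t fun p hp => congrFun (congrFun hpos ⟨t, ht⟩) ⟨p, hp⟩
  have hmsgR : (fun t : ↥R => φ t (c₁ t)) = fun t : ↥R => φ t (c₂ t) := by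
    funext t
    by_cases htA : (t : Fin N) ∈ A
    · exact congrFun hmsg ⟨t, htA⟩
    · rw [hcols t (mem_sdiff.mpr ⟨t.2, htA⟩)]
  refine hMDS c₁ hc₁ c₂ hc₂ (insert i (R \ A)) ?_ ?_
  · rw [card_insert_of_notMem fun h => hiR (mem_sdiff.mp h).1, hK]
  · simp only [mem_insert, forall_eq_or_imp]
    exact ⟨by rw [hΦ c₁ hc₁, hΦ c₂ hc₂, hmsgR], hcols⟩

theorem le_sum_download_of_card_sdiff [Fintype F] [Nontrivial F] {r : ℕ}
    (hcard : Nat.card C = Fintype.card F ^ (K * r))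
    (hMDS : ∀ c₁ ∈ C, ∀ c₂ ∈ C, ∀ S : Finset (Fin N), #S = K →
      (∀ j ∈ S, c₁ j = c₂ j) → c₁ = c₂)
    (hloc : ∀ c₁ ∈ C, ∀ c₂ ∈ C, ∀ j : Fin N, (∀ p ∈ T, c₁ j p = c₂ j p) → c₁ j = c₂ j)
    (hT : #T = r) (hΦ : ∀ c ∈ C, c i = Φ (fun t => φ t (c t))) (hiR : i ∉ R)
    (hK : #(R \ A) + 1 = K) :
    r ≤ ∑ t ∈ A, b t := by
  have hle := Nat.card_le_card_of_injective _
    (injOn_restrict_prod_messages (b := b) hMDS hloc hΦ hiR hK).injective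
  simp only [hcard, Nat.card_eq_fintype_card, Fintype.card_prod, Fintype.card_pi,
    Fintype.card_coe, Fintype.card_fin, prod_const, card_univ, hT,
    prod_coe_sort A fun t => Fintype.card F ^ b t, prod_pow_eq_pow_sum, ← pow_mul,
    ← pow_add] at hle
  have := (Nat.pow_le_pow_iff_right Fintype.one_lt_card).mp hle
  rw [← hK, add_mul, one_mul, mul_comm r] at this
  omega

end RepairScheme

theorem rasl_cut_set_bound_general
    (F : Type*) [Field F] [Fintype F]
    (N K r L D : ℕ)
    (hrL : r < L)
    (hK : 1 ≤ K) (hKD : K ≤ D)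
    (C : Set (Fin N → Fin L → F))
    (hcard : Nat.card C = Fintype.card F ^ (K * r))
    (hMDS : ∀ c₁ ∈ C, ∀ c₂ ∈ C, ∀ S : Finset (Fin N), S.card = K →
      (∀ j ∈ S, c₁ j = c₂ j) → c₁ = c₂)
    (hloc : ∀ c₁ ∈ C, ∀ c₂ ∈ C, ∀ j : Fin N, ∀ T : Finset (Fin L), T.card = r →
      (∀ p ∈ T, c₁ j p = c₂ j p) → c₁ j = c₂ j) :
    ∀ i : Fin N, ∀ R : Finset (Fin N), R.card = D → i ∉ R →
    ∀ b : Fin N → ℕ,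
    ∀ φ : (t : Fin N) → (Fin L → F) → (Fin (b t) → F),
    ∀ Φ : ((t : ↥R) → (Fin (b (t : Fin N)) → F)) → (Fin L → F),
      (∀ c ∈ C, c i = Φ (fun t => φ t (c t))) →
      (D : ℚ) * (r : ℚ) / ((D : ℚ) - (K : ℚ) + 1) ≤ ∑ t ∈ R, (b t : ℚ) := by
  intro i R hR hiR b φ Φ hΦ
  obtain ⟨T, -, hT⟩ := exists_subset_card_eq (s := (univ : Finset (Fin L))) (n := r)
    (by simpa using hrL.le)
  have hwindow : ∀ A ⊆ R, #A = D - K + 1 → r ≤ ∑ t ∈ A, b t := fun A hAR hA =>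
    le_sum_download_of_card_sdiff hcard hMDS (fun c₁ hc₁ c₂ hc₂ j => hloc c₁ hc₁ c₂ hc₂ j T hT) hT hΦ hiR
      (by rw [card_sdiff_of_subset hAR]; omega)
  have hbound : D * r ≤ (D - K + 1) * ∑ t ∈ R, b t := by
    simpa [hR] using card_nsmul_le_nsmul_sum_of_forall_card_eq (by omega) hwindow
  have hm : ((D - K + 1 : ℕ) : ℚ) = (D : ℚ) - K + 1 := by push_cast [Nat.cast_sub hKD]; ring
  rw [div_le_iff₀ (by rw [← hm]; positivity), ← hm, ← Nat.cast_sum]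
  exact_mod_cast hbound.trans_eq (mul_comm _ _)

/-- Theorem 7 of the paper: cut-set bound for RASL codes. For an
`(N, K, k = Kr; L, δ)`-RASL code in which each column is a repair set with
`(r, L - r + 1)`-locality, the total download of any repair scheme recovering one
column from `D` helper columns is at least `D·r/(D - K + 1)`. -/
theorem rasl_cut_set_bound
    (F : Type*) [Field F] [Fintype F]
    (N K r δ L D : ℕ)
    (hr0 : 0 < r) (hrL : r < L) (hL : L + 1 = r + δ)
    (hK : 1 ≤ K) (hKD : K ≤ D) (hDN : D < N)
    (C : Set (Fin N → Fin L → F))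
    (hcard : Nat.card C = Fintype.card F ^ (K * r))
    (hMDS : ∀ c₁ ∈ C, ∀ c₂ ∈ C, ∀ S : Finset (Fin N), S.card = K →
      (∀ j ∈ S, c₁ j = c₂ j) → c₁ = c₂)
    (hloc : ∀ c₁ ∈ C, ∀ c₂ ∈ C, ∀ j : Fin N, ∀ T : Finset (Fin L), T.card = r →
      (∀ p ∈ T, c₁ j p = c₂ j p) → c₁ j = c₂ j) :
    ∀ i : Fin N, ∀ R : Finset (Fin N), R.card = D → i ∉ R →
    ∀ b : Fin N → ℕ,
    ∀ φ : (t : Fin N) → (Fin L → F) → (Fin (b t) → F),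
    ∀ Φ : ((t : ↥R) → (Fin (b (t : Fin N)) → F)) → (Fin L → F),
      (∀ c ∈ C, c i = Φ (fun t => φ t (c t))) →
      (D : ℚ) * (r : ℚ) / ((D : ℚ) - (K : ℚ) + 1) ≤ ∑ t ∈ R, (b t : ℚ) :=
  rasl_cut_set_bound_general F N K r L D hrL hK hKD C hcard hMDS hloc
end

section
/- Let 𝔽_{q₁} be a subfield of the finite field 𝔽_q with q = q₁^ℓ, and let 𝒜 be the array-form Tamo–Barg code over 𝔽_q. Let i₁ < ⋯ < i_τ be indices in [m] and let E_{i_t} ⊆ [L] with |E_{i_t}| ≥ δ for each t ∈ [τ] be the erased positions of column A_{i_t}. If m₂ ≥ q·τ/q₁, then, setting M = Σ_{t∈[τ]} |E_{i_t}| − τ·(δ − 1), the erasure pattern can be recovered by contacting all remaining racks with each helper sending M elements of 𝔽_{q₁} (i.e., M/ℓ symbols of 𝔽_q): there exist functions φ_j : 𝔽_q^L → 𝔽_{q₁}^M for every j ∈ [m]∖{i₁, …, i_τ} and a function Φ such that for every codeword (A₁, …, A_m) ∈ 𝒜, the tuple of erased entries ((A_{i_t})|_{E_{i_t}})_{t∈[τ]}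 equals Φ applied to the helper messages ((φ_j(A_j))_{j∈[m]∖{i₁,…,i_τ}}) together with the surviving entries ((A_{i_t})|_{[L]∖E_{i_t}})_{t∈[τ]}. -/
open Polynomial

/-- The array-form Tamo–Barg code (Construction 2 of the paper). -/
def TBArrayCode {F : Type*} [Field F] (m m₁ L r : ℕ)
    (y : Fin m → F) (h : F[X]) (β : Fin m → Fin L → F) :
    Set (Fin m → Fin L → F) :=
  {A | ∃ G : F[X], G.degree < ((m₁ * L : ℕ) : WithBot ℕ) ∧
    (∀ t : Fin m, (t : ℕ) < m₁ →
      (G % (h - C (y t))).degree < ((r : ℕ) : WithBot ℕ)) ∧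
    A = fun t j => G.eval (β t j)}

/-!
Every codeword comes from some `G = ∑_{a < r} fₐ(h) xᵃ` with `deg fₐ < m₁`. Hence column `j`
evaluates the polynomial `Rⱼ = ∑ₐ fₐ(yⱼ) xᵃ` of degree `< r` at the roots of `h - yⱼ`, and for
every `z` the values `Rⱼ(z) = F_z(yⱼ)`, where `F_z = ∑ₐ zᵃ fₐ`, form a Reed–Solomon codeword of
dimension `m₁` indexed by the racks.

The `L - |E|` survivors of an erased rack `i` are values of `Rᵢ`. The `|E| - δ + 1` values still
missing, at fresh points `z`, are recovered by Guruswami–Wootters trace repair of `F_z`, with all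
`τ` erased racks treated as erasures. Apply the dual Reed–Solomon parity check to
`u · Q_γ · F_z`, where `u` vanishes on the other erased racks and
`(x - yᵢ) Q_γ(x) = Tr(γ (x - yᵢ))` has degree `q/q₁ - 1`; this is where `m₂ ≥ qτ/q₁` is
needed. For each `γ`, the check expresses `Tr(γ c F_z(yᵢ))` (with `c ≠ 0`) through one trace
per helper, and the trace form is nondegenerate. So two codewords with the same helper traces and
the same survivors agree on the erasures, and `Φ` may return any codeword consistent with its input.
-/

open Finset Module Lagrange

theorem Function.exists_forall_mem_eq_comp {α β γ : Type*} [Nonempty γ] {s : Set α}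
    {f : α → β} {g : α → γ} (hfg : ∀ a ∈ s, ∀ b ∈ s, f a = f b → g a = g b) :
    ∃ Φ : β → γ, ∀ a ∈ s, g a = Φ (f a) :=
  ⟨extend (fun a : s => f a) (fun a : s => g a) fun _ => Classical.arbitrary γ, fun a ha =>
    ((show FactorsThrough (fun a : s => g a) (fun a : s => f a) from fun a b hab =>
      hfg a a.2 b b.2 hab).extend_apply _ ⟨a, ha⟩).symm⟩

theorem Finset.exists_disjoint_card_eq {α : Type*} [Fintype α] [DecidableEq α] (B : Finset α)
    {n : ℕ} (hn : n + #B ≤ Fintype.card α) : ∃ T : Finset α, Disjoint T B ∧ #T = n := by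
  obtain ⟨T, hT, hTn⟩ := exists_subset_card_eq (s := Bᶜ) (n := n) (by rw [card_compl]; omega)
  exact ⟨T, subset_compl_iff_disjoint_right.1 hT, hTn⟩

theorem Lagrange.sum_eval_div_prod_sub_eq_zero {F ι : Type*} [Field F] [DecidableEq ι]
    {s : Finset ι} {v : ι → F} (hvs : Set.InjOn v s) {P : F[X]} (hP : P.natDegree + 1 < #s) :
    ∑ i ∈ s, P.eval (v i) / ∏ j ∈ s.erase i, (v i - v j) = 0 := by
  have hlt : P.degree < ↑(#s - 1) :=
    degree_le_natDegree.trans_lt (by exact_mod_cast (by omega : P.natDegree < #s - 1))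
  rw [← coeff_eq_sum hvs (hlt.trans_le (by exact_mod_cast Nat.sub_le _ _)),
    coeff_eq_zero_of_degree_lt hlt]

section Repair

variable {F ι : Type*} [Field F] [DecidableEq ι] {s S : Finset ι} {y : ι → F} {i : ι}

theorem eval_nodal_erase_mul_div_eq_neg_sum_sdiff (hS : S ⊆ s) (hy : Set.InjOn y s)
    (hi : i ∈ S) {V : F[X]} (hV : V.natDegree + #S < #s) :
    (nodal (S.erase i) y).eval (y i) * V.eval (y i) / ∏ k ∈ s.erase i, (y i - y k) =
      -∑ j ∈ s \ S, (nodal (S.erase i) y).eval (y j) * V.eval (y j) /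
        ∏ k ∈ s.erase j, (y j - y k) := by
  have hdeg : (nodal (S.erase i) y * V).natDegree + 1 < #s := by
    have := natDegree_mul_le (p := nodal (S.erase i) y) (q := V)
    rw [natDegree_nodal, card_erase_of_mem hi] at this
    have := card_pos.2 ⟨i, hi⟩
    omega
  have hsum := sum_eval_div_prod_sub_eq_zero hy hdeg
  rw [← sum_sdiff hS, sum_eq_single_of_mem i hi fun j hj hji => by
    rw [eval_mul, eval_nodal_at_node (mem_erase.2 ⟨hji, hj⟩), zero_mul, zero_div]] at hsum
  simp only [eval_mul] at hsum
  linear_combination hsum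

noncomputable def repairCoeff (s S : Finset ι) (y : ι → F) (i j : ι) : F :=
  (nodal (S.erase i) y).eval (y j) / ((y j - y i) * ∏ k ∈ s.erase j, (y j - y k))

end Repair

namespace FiniteField

theorem one_lt_natCard_of_finite (K F : Type*) [Field K] [Field F] [Finite F] [Algebra K F] :
    1 < Nat.card K :=
  have := Finite.of_injective _ (FaithfulSMul.algebraMap_injective K F)
  Finite.one_lt_card

variable (K : Type*) {F : Type*} [Field K] [Field F] [Finite F] [Algebra K F]

theorem natCard_pow_finrank_pred_add_le {k n : ℕ} (hk : 0 < k)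
    (h : Nat.card F * k ≤ n * Nat.card K) : Nat.card K ^ (finrank K F - 1) + k ≤ n + 1 := by
  have hq := one_lt_natCard_of_finite K F
  have hF : Nat.card F = Nat.card K ^ (finrank K F - 1) * Nat.card K := by
    rw [← pow_succ, Nat.sub_add_cancel finrank_pos, natCard_eq_pow_finrank (K := K)]
  rw [hF, mul_right_comm] at h
  have h' := Nat.le_of_mul_le_mul_right h (by omega)
  have := Nat.one_le_pow (finrank K F - 1) (Nat.card K) (by omega)
  nlinarith

noncomputable def traceDivPoly (γ a : F) : F[X] :=
  ∑ i ∈ range (finrank K F), C (γ ^ Nat.card K ^ i) * (X - C a) ^ (Nat.card K ^ i - 1)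

theorem sub_mul_eval_traceDivPoly (γ a x : F) :
    (x - a) * (traceDivPoly K γ a).eval x = algebraMap K F (Algebra.trace K F (γ * (x - a))) := by
  rw [algebraMap_trace_eq_sum_pow, traceDivPoly, eval_finsetSum, mul_sum]
  refine sum_congr rfl fun i _ => ?_
  have : Nat.card K ^ i ≠ 0 := pow_ne_zero _ (one_lt_natCard_of_finite K F).ne_bot
  simp only [eval_mul, eval_C, eval_pow, eval_sub, eval_X, mul_pow, ← mul_pow_sub_one this (x - a)]
  ring

theorem eval_traceDivPoly_self (γ a : F) : (traceDivPoly K γ a).eval a = γ := by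
  rw [traceDivPoly, eval_finsetSum, sum_eq_single_of_mem 0 (mem_range.2 finrank_pos)]
  · simp
  · intro i _ hi
    have : 1 < Nat.card K ^ i := Nat.one_lt_pow hi (one_lt_natCard_of_finite K F)
    simp [zero_pow (Nat.sub_ne_zero_of_lt this)]

theorem natDegree_traceDivPoly_le (γ a : F) :
    (traceDivPoly K γ a).natDegree ≤ Nat.card K ^ (finrank K F - 1) - 1 := by
  refine natDegree_sum_le_of_forall_le _ _ fun i hi => (natDegree_C_mul_le _ _).trans ?_
  rw [natDegree_pow, natDegree_X_sub_C, mul_one]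
  have := Nat.pow_le_pow_right (one_lt_natCard_of_finite K F).le
    (Nat.le_sub_one_of_lt (mem_range.1 hi))
  omega

variable {ι : Type*} [DecidableEq ι] {s S : Finset ι} {y : ι → F} {i : ι}

theorem trace_mul_eval_mul_eq_zero (hS : S ⊆ s) (hy : Set.InjOn y s) (hi : i ∈ S) {P : F[X]}
    (hP : P.natDegree + Nat.card K ^ (finrank K F - 1) + #S ≤ #s)
    (htr : ∀ j ∈ s \ S, Algebra.trace K F (repairCoeff s S y i j * P.eval (y j)) = 0) (γ : F) :
    Algebra.trace K F
      ((nodal (S.erase i) y).eval (y i) / (∏ k ∈ s.erase i, (y i - y k)) * P.eval (y i) * γ) =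
      0 := by
  have hdeg : (traceDivPoly K γ (y i) * P).natDegree + #S < #s := by
    have := natDegree_traceDivPoly_le K γ (y i)
    have := natDegree_mul_le (p := traceDivPoly K γ (y i)) (q := P)
    have := Nat.one_le_pow (finrank K F - 1) _ (one_lt_natCard_of_finite K F).le
    have := card_pos.2 ⟨i, hi⟩
    omega
  have hparity := eval_nodal_erase_mul_div_eq_neg_sum_sdiff hS hy hi hdeg
  have hterm : ∀ j ∈ s \ S, (nodal (S.erase i) y).eval (y j) *
      (traceDivPoly K γ (y i) * P).eval (y j) / ∏ k ∈ s.erase j, (y j - y k) =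
      algebraMap K F (Algebra.trace K F (γ * (y j - y i))) *
        (repairCoeff s S y i j * P.eval (y j)) := by
    intro j hj
    obtain ⟨hjs, hjS⟩ := mem_sdiff.1 hj
    have : y j - y i ≠ 0 := sub_ne_zero.2 fun h => hjS (hy hjs (hS hi) h ▸ hi)
    rw [← sub_mul_eval_traceDivPoly, repairCoeff, eval_mul]
    field_simp
  rw [sum_congr rfl hterm, eval_mul, eval_traceDivPoly_self] at hparity
  calc _ = Algebra.trace K F (-∑ j ∈ s \ S, algebraMap K F (Algebra.trace K F (γ * (y j - y i))) *
          (repairCoeff s S y i j * P.eval (y j))) := by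
        rw [← hparity]; congr 1; ring
    _ = 0 := by
        simp only [map_neg, map_sum, ← Algebra.smul_def, map_smul, smul_eq_mul]
        rw [sum_eq_zero fun j hj => by rw [htr j hj, mul_zero], neg_zero]

/-- Guruswami–Wootters trace repair, with every node of `S` erased. -/
theorem eval_eq_zero_of_trace_repairCoeff_mul_eval_eq_zero (hS : S ⊆ s) (hy : Set.InjOn y s)
    (hi : i ∈ S) {P : F[X]} (hP : P.natDegree + Nat.card K ^ (finrank K F - 1) + #S ≤ #s)
    (htr : ∀ j ∈ s \ S, Algebra.trace K F (repairCoeff s S y i j * P.eval (y j)) = 0) :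
    P.eval (y i) = 0 := by
  have hne : ∀ j ∈ s.erase i, y i - y j ≠ 0 := fun j hj =>
    sub_ne_zero.2 fun h => ne_of_mem_erase hj (hy (mem_of_mem_erase hj) (hS hi) h.symm)
  have hD : (nodal (S.erase i) y).eval (y i) / ∏ k ∈ s.erase i, (y i - y k) ≠ 0 :=
    div_ne_zero (eval_nodal_not_at_node fun j hj => sub_ne_zero.1
      (hne j (mem_erase.2 ⟨ne_of_mem_erase hj, hS (mem_of_mem_erase hj)⟩))) (prod_ne_zero_iff.2 hne)
  have := (traceForm_nondegenerate K F).1 _ fun γ => (Algebra.traceForm_apply K _ γ).trans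
    (trace_mul_eval_mul_eq_zero K hS hy hi hP htr γ)
  exact (mul_eq_zero.1 this).resolve_left hD

end FiniteField

section Decomposition

variable {F : Type*} [Field F]

theorem sub_C_dvd_comp_sub_C_eval (p h : F[X]) (x : F) : h - C x ∣ p.comp h - C (p.eval x) := by
  simpa [sub_comp] using map_dvd (compRingHom h) (X_sub_C_dvd_sub_C_eval (p := p) (a := x))

theorem isCoprime_sub_C_sub_C (h : F[X]) {x x' : F} (hx : x ≠ x') :
    IsCoprime (h - C x) (h - C x') := by
  simpa [sub_comp] using
    (isCoprime_X_sub_C_of_isUnit_sub (sub_ne_zero.2 hx).isUnit).map (compRingHom h)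

theorem sum_fin_C_coeff_mul_X_pow {n : ℕ} {p : F[X]} (hp : p.degree < n) :
    ∑ a : Fin n, C (p.coeff a) * X ^ (a : ℕ) = p := by
  simp only [C_mul_X_pow_eq_monomial]
  rw [sum_fin (fun a c => monomial a c) (fun _ => monomial_zero_right _) hp, sum_monomial_eq]

variable {n r : ℕ} {h : F[X]}

theorem natDegree_sum_comp_mul_X_pow_lt (hn : 0 < n) (hh : 0 < h.natDegree)
    (hr : r ≤ h.natDegree) {f : Fin r → F[X]} (hf : ∀ a, (f a).natDegree < n) :
    (∑ a, (f a).comp h * X ^ (a : ℕ)).natDegree < n * h.natDegree := by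
  refine lt_of_le_of_lt (b := (n - 1) * h.natDegree + (r - 1))
    (natDegree_sum_le_of_forall_le _ _ fun a _ => natDegree_mul_le.trans ?_) ?_
  · rw [natDegree_comp, natDegree_X_pow]
    have := Nat.mul_le_mul_right h.natDegree (Nat.le_sub_one_of_lt (hf a))
    omega
  · have : n * h.natDegree = (n - 1) * h.natDegree + h.natDegree := by
      rw [← Nat.succ_mul, Nat.succ_eq_add_one, Nat.sub_add_cancel hn]
    omega

theorem sub_C_dvd_sub_sum_comp_mul_X_pow {G : F[X]} {x : F} (hG : (G % (h - C x)).degree < r)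
    {f : Fin r → F[X]} (hf : ∀ a, (f a).eval x = (G % (h - C x)).coeff a) :
    h - C x ∣ G - ∑ a, (f a).comp h * X ^ (a : ℕ) := by
  have hsum : ∑ a, (f a).comp h * X ^ (a : ℕ) - G % (h - C x) =
      ∑ a : Fin r, ((f a).comp h - C ((f a).eval x)) * X ^ (a : ℕ) := by
    conv_lhs => rw [← sum_fin_C_coeff_mul_X_pow hG]
    simp only [sub_mul, sum_sub_distrib, hf]
  have hmod : G - G % (h - C x) = (h - C x) * (G / (h - C x)) := by
    linear_combination -EuclideanDomain.div_add_mod G (h - C x)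
  rw [show G - ∑ a, (f a).comp h * X ^ (a : ℕ) = (G - G % (h - C x)) -
    (∑ a, (f a).comp h * X ^ (a : ℕ) - G % (h - C x)) by ring, hmod, hsum]
  exact dvd_sub (dvd_mul_right _ _) (dvd_sum fun a _ =>
    (sub_C_dvd_comp_sub_C_eval _ _ _).mul_right _)

theorem exists_eq_sum_comp_mul_X_pow {c : Fin n → F} (hc : Function.Injective c) (hn : 0 < n)
    (hh : 0 < h.natDegree) (hr : r ≤ h.natDegree) {G : F[X]} (hG : G.degree < ↑(n * h.natDegree))
    (hmod : ∀ i, (G % (h - C (c i))).degree < r) :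
    ∃ f : Fin r → F[X], (∀ a, (f a).natDegree < n) ∧ G = ∑ a, (f a).comp h * X ^ (a : ℕ) := by
  classical
  set f : Fin r → F[X] := fun a => interpolate univ c fun i => (G % (h - C (c i))).coeff a
  have hf : ∀ a, (f a).natDegree < n := fun a => by
    rcases eq_or_ne (f a) 0 with h0 | h0
    · simpa [h0] using hn
    · exact (natDegree_lt_iff_degree_lt h0).2 <|
        (degree_interpolate_lt _ hc.injOn).trans_eq (by rw [card_univ, Fintype.card_fin])
  refine ⟨f, hf, ?_⟩
  have hprod : ∏ i, (h - C (c i)) ∣ G - ∑ a, (f a).comp h * X ^ (a : ℕ) :=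
    Fintype.prod_dvd_of_coprime (fun i j hij => isCoprime_sub_C_sub_C h (hc.ne hij)) fun i =>
      sub_C_dvd_sub_sum_comp_mul_X_pow (hmod i) fun a =>
        eval_interpolate_at_node _ hc.injOn (mem_univ i)
  have hprod_deg : (∏ i, (h - C (c i))).degree = ↑(n * h.natDegree) := by
    rw [degree_prod, sum_congr rfl fun i _ => degree_sub_C (natDegree_pos_iff_degree_pos.1 hh),
      sum_const, card_univ, Fintype.card_fin, degree_eq_natDegree (ne_zero_of_natDegree_gt hh),
      nsmul_eq_mul]
    norm_cast
  rw [← sub_eq_zero]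
  refine eq_zero_of_dvd_of_degree_lt hprod ?_
  rw [hprod_deg]
  exact (degree_sub_le _ _).trans_lt (max_lt hG (degree_le_natDegree.trans_lt
    (by exact_mod_cast natDegree_sum_comp_mul_X_pow_lt hn hh hr hf)))

end Decomposition

theorem exists_disjoint_image_compl_card_eq {F : Type*} [Fintype F] [DecidableEq F]
    {r δ L : ℕ} (hδ : 0 < δ) (hL : L + 1 = r + δ) {b : Fin L → F} (hb : Function.Injective b)
    {E : Finset (Fin L)} (hE : δ ≤ #E) :
    ∃ T : Finset F, Disjoint T (Eᶜ.image b) ∧ #T = #E - (δ - 1) ∧ r ≤ #T + #Eᶜ := by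
  have hLF : L ≤ Fintype.card F := by simpa using Fintype.card_le_of_injective _ hb
  have hEL : #E ≤ L := by simpa using card_le_univ E
  have hcompl : #Eᶜ = L - #E := by rw [card_compl, Fintype.card_fin]
  obtain ⟨T, hT, hTcard⟩ := exists_disjoint_card_eq (Eᶜ.image b) (n := #E - (δ - 1)) <| by
    rw [card_image_of_injective _ hb, hcompl]
    omega
  refine ⟨T, hT, hTcard, ?_⟩
  rw [hTcard, hcompl]
  omega

namespace TBArrayCode

variable {F : Type*} [Field F] {r : ℕ}

noncomputable def columnPoly (f : Fin r → F[X]) (c : F) : F[X] :=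
  ∑ a, C ((f a).eval c) * X ^ (a : ℕ)

noncomputable def rowPoly (f : Fin r → F[X]) (z : F) : F[X] :=
  ∑ a : Fin r, C (z ^ (a : ℕ)) * f a

theorem eval_rowPoly (f : Fin r → F[X]) (z c : F) :
    (rowPoly f z).eval c = (columnPoly f c).eval z := by
  simp only [rowPoly, columnPoly, eval_finsetSum, eval_mul, eval_C, eval_pow, eval_X]
  exact sum_congr rfl fun a _ => mul_comm _ _

theorem natDegree_rowPoly_le {f : Fin r → F[X]} {d : ℕ} (hf : ∀ a, (f a).natDegree ≤ d) (z : F) :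
    (rowPoly f z).natDegree ≤ d :=
  natDegree_sum_le_of_forall_le _ (fun a : Fin r => C (z ^ (a : ℕ)) * f a)
    fun a _ => (natDegree_C_mul_le _ _).trans (hf a)

theorem degree_columnPoly_lt (f : Fin r → F[X]) (c : F) : (columnPoly f c).degree < r :=
  degree_sum_fin_lt _

theorem columnPoly_sub (f f' : Fin r → F[X]) (c : F) :
    columnPoly (f - f') c = columnPoly f c - columnPoly f' c := by
  simp [columnPoly, sub_mul, sum_sub_distrib]

theorem eval_sum_comp_mul_X_pow {h : F[X]} {x c : F} (hx : h.eval x = c) (f : Fin r → F[X]) :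
    (∑ a, (f a).comp h * X ^ (a : ℕ)).eval x = (columnPoly f c).eval x := by
  simp [columnPoly, eval_finsetSum, hx]

theorem interpolate_eq_columnPoly {L : ℕ} (hrL : r ≤ L) {b : Fin L → F}
    (hb : Function.Injective b) {f : Fin r → F[X]} {c : F} {v : Fin L → F}
    (hv : ∀ p, v p = (columnPoly f c).eval (b p)) : interpolate univ b v = columnPoly f c :=
  (eq_interpolate_of_eval_eq _ hb.injOn ((degree_columnPoly_lt f c).trans_le
    (by simpa using hrL)) fun p _ => (hv p).symm).symm

variable {m m₁ L : ℕ} {y : Fin m → F} {h : F[X]} {β : Fin m → Fin L → F}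

theorem exists_columnPoly (hm₁ : 0 < m₁) (hm₁m : m₁ ≤ m) (hy : Function.Injective y)
    (hdeg : h.degree = L) (hL : 0 < L) (hrL : r ≤ L) (hβroot : ∀ j p, h.eval (β j p) = y j)
    {A : Fin m → Fin L → F} (hA : A ∈ TBArrayCode m m₁ L r y h β) :
    ∃ f : Fin r → F[X], (∀ a, (f a).natDegree < m₁) ∧
      ∀ j p, A j p = (columnPoly f (y j)).eval (β j p) := by
  obtain ⟨G, hG, hmod, rfl⟩ := hA
  have hh : h.natDegree = L := natDegree_eq_of_degree_eq_some hdeg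
  obtain ⟨f, hf, rfl⟩ := exists_eq_sum_comp_mul_X_pow (c := y ∘ Fin.castLE hm₁m)
    (hy.comp (Fin.castLE_injective _)) hm₁ (hh ▸ hL) (hh ▸ hrL) (hh ▸ hG)
    fun i => hmod (Fin.castLE hm₁m i) i.2
  exact ⟨f, hf, fun j p => eval_sum_comp_mul_X_pow (hβroot j p) f⟩

/-- The symbol of `K = 𝔽_{q₁}` that helper rack `j`, holding column `v` at the points `b = β j`,
sends for the point `z` of the erased rack `i`. -/
noncomputable def helperTrace (K : Type*) [Field K] [Finite F] [Algebra K F]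
    (S : Finset (Fin m)) (y : Fin m → F) (b : Fin L → F) (i j : Fin m) (z : F) (v : Fin L → F) :
    K :=
  Algebra.trace K F (repairCoeff univ S y i j * (interpolate univ b v).eval z)

theorem eq_of_helperTrace_eq (K : Type*) [Field K] [Finite F] [Algebra K F] [DecidableEq F]
    {m₂ : ℕ} (hm : m = m₁ + m₂) (hm₁ : 0 < m₁) (hy : Function.Injective y) (hdeg : h.degree = L)
    (hL : 0 < L) (hrL : r ≤ L) (hβinj : ∀ j, Function.Injective (β j))
    (hβroot : ∀ j p, h.eval (β j p) = y j) {S : Finset (Fin m)}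
    (hS : Nat.card F * #S ≤ m₂ * Nat.card K) {i : Fin m} (hi : i ∈ S) {E : Finset (Fin L)}
    {T : Finset F} (hT : Disjoint T (Eᶜ.image (β i))) (hTcard : r ≤ #T + #Eᶜ)
    {A A' : Fin m → Fin L → F} (hA : A ∈ TBArrayCode m m₁ L r y h β)
    (hA' : A' ∈ TBArrayCode m m₁ L r y h β) (hsurv : ∀ p ∉ E, A i p = A' i p)
    (hmsg : ∀ j ∉ S, ∀ z ∈ T,
      helperTrace K S y (β j) i j z (A j) = helperTrace K S y (β j) i j z (A' j)) :
    A i = A' i := by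
  obtain ⟨f, hf, hAf⟩ := exists_columnPoly hm₁ (by omega) hy hdeg hL hrL hβroot hA
  obtain ⟨f', hf', hAf'⟩ := exists_columnPoly hm₁ (by omega) hy hdeg hL hrL hβroot hA'
  have hdiff : ∀ j, interpolate univ (β j) (A j) - interpolate univ (β j) (A' j) =
      columnPoly (f - f') (y j) := fun j => by
    rw [interpolate_eq_columnPoly hrL (hβinj j) (hAf j),
      interpolate_eq_columnPoly hrL (hβinj j) (hAf' j), columnPoly_sub]
  have hfresh : ∀ z ∈ T, (columnPoly (f - f') (y i)).eval z = 0 := by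
    intro z hz
    rw [← eval_rowPoly]
    refine FiniteField.eval_eq_zero_of_trace_repairCoeff_mul_eval_eq_zero K (subset_univ S)
      hy.injOn hi ?_ fun j hj => ?_
    · have := natDegree_rowPoly_le (f := f - f') (fun a => (natDegree_sub_le _ _).trans
        (Nat.le_sub_one_of_lt (max_lt (hf a) (hf' a)))) z
      have := FiniteField.natCard_pow_finrank_pred_add_le K (card_pos.2 ⟨i, hi⟩) hS
      simp only [card_univ, Fintype.card_fin]
      omega
    · have := hmsg j (mem_sdiff.1 hj).2 z hz
      rw [helperTrace, helperTrace, ← sub_eq_zero, ← map_sub, ← mul_sub, ← eval_sub,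
        hdiff] at this
      rwa [eval_rowPoly]
  have hzero : columnPoly (f - f') (y i) = 0 := by
    refine eq_zero_of_degree_lt_of_eval_finset_eq_zero (T ∪ Eᶜ.image (β i)) ?_ fun x hx => ?_
    · rw [card_union_of_disjoint hT, card_image_of_injective _ (hβinj i)]
      exact (degree_columnPoly_lt _ _).trans_le (by exact_mod_cast hTcard)
    · rcases mem_union.1 hx with hx | hx
      · exact hfresh x hx
      · obtain ⟨p, hp, rfl⟩ := mem_image.1 hx
        rw [columnPoly_sub, eval_sub, ← hAf, ← hAf', hsurv p (mem_compl.1 hp), sub_self]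
  funext p
  rw [← sub_eq_zero, hAf, hAf', ← eval_sub, ← columnPoly_sub, hzero, eval_zero]

end TBArrayCode

theorem tamo_barg_multiple_partial_erasure_repair_general
    (F : Type*) [Field F] [Fintype F]
    (K₁ : Subfield F)
    (m m₁ m₂ r δ L : ℕ)
    (hm : m = m₁ + m₂) (hm₁ : 1 ≤ m₁) (hδ : 2 ≤ δ) (hL : L + 1 = r + δ)
    (y : Fin m → F) (hy : Function.Injective y)
    (h : F[X]) (hdeg : h.degree = ((L : ℕ) : WithBot ℕ))
    (β : Fin m → Fin L → F)
    (hβinj : ∀ i : Fin m, Function.Injective (β i))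
    (hβroot : ∀ (i : Fin m) (j : Fin L), h.eval (β i j) = y i)
    (τ : ℕ) (idx : Fin τ → Fin m)
    (E : Fin τ → Finset (Fin L)) (hE : ∀ t : Fin τ, δ ≤ (E t).card)
    (hm₂ : Nat.card F * τ ≤ m₂ * Nat.card K₁)
    (M : ℕ) (hM : M = (∑ t : Fin τ, (E t).card) - τ * (δ - 1)) :
    ∃ φ : (j : {j : Fin m // j ∉ Set.range idx}) → (Fin L → F) → (Fin M → ↥K₁),
    ∃ Φ : ((j : {j : Fin m // j ∉ Set.range idx}) → (Fin M → ↥K₁)) →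
          ((t : Fin τ) → ({p : Fin L // p ∉ E t} → F)) →
          ((t : Fin τ) → (↥(E t) → F)),
      ∀ A ∈ TBArrayCode m m₁ L r y h β,
        (fun (t : Fin τ) (p : ↥(E t)) => A (idx t) p.1) =
          Φ (fun j => φ j (A j.1)) (fun t p => A (idx t) p.1) := by
  classical
  set S := (Set.range idx).toFinset
  have hS : Nat.card F * #S ≤ m₂ * Nat.card K₁ := le_trans (Nat.mul_le_mul_left _
    (by simpa [S, Set.toFinset_range] using card_image_le (s := univ) (f := idx))) hm₂
  -- the fresh points of rack `idx t`: with its survivors, `r` values of its column polynomial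
  choose T hT hTcard hTr using fun t =>
    exists_disjoint_image_compl_card_eq (by omega) hL (hβinj (idx t)) (hE t)
  let e : Fin M ≃ (t : Fin τ) × T t := (Fintype.equivFinOfCardEq <| by
    rw [Fintype.card_sigma, hM]
    simp only [Fintype.card_coe, hTcard]
    rw [sum_tsub_distrib _ fun t _ => (Nat.sub_le _ _).trans (hE t), sum_const, card_univ,
      Fintype.card_fin, smul_eq_mul]).symm
  let φ (j : {j // j ∉ Set.range idx}) (v : Fin L → F) (k : Fin M) : K₁ :=
    TBArrayCode.helperTrace K₁ S y (β j) (idx (e k).1) j (e k).2 v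
  obtain ⟨Φ, hΦ⟩ := Function.exists_forall_mem_eq_comp (s := TBArrayCode m m₁ L r y h β)
    (f := fun A => (fun j => φ j (A j), fun t (p : {p // p ∉ E t}) => A (idx t) p.1))
    (g := fun A t (p : E t) => A (idx t) p.1) fun A hA A' hA' hAA' => by
      simp only [Prod.mk.injEq, funext_iff] at hAA'
      funext t p
      rw [TBArrayCode.eq_of_helperTrace_eq K₁ hm hm₁ hy hdeg (by omega) (by omega) hβinj hβroot
        hS (Set.mem_toFinset.2 ⟨t, rfl⟩) (hT t) (hTr t) hA hA' (fun p hp => hAA'.2 t ⟨p, hp⟩)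
        fun j hj z hz => by
          have := hAA'.1 ⟨j, by simpa [S] using hj⟩ (e.symm ⟨t, z, hz⟩)
          dsimp only [φ] at this
          rwa [Equiv.apply_symm_apply] at this]
  exact ⟨φ, fun msgs surv => Φ (msgs, surv), hΦ⟩

/-- Theorem 10 of the paper: repairing multiple partial rack erasures.
Let `𝔽_{q₁} ⊆ 𝔽_q` with `q = q₁^ℓ`, and suppose columns `i₁ < ⋯ < i_τ` suffer erasure
patterns `E_{i_t}` with `|E_{i_t}| ≥ δ`. If `m₂ ≥ q·τ/q₁` (i.e. `m₂·q₁ ≥ q·τ`), then,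
with `M = ∑_t |E_{i_t}| - τ·(δ-1)`, the erasures can be recovered by contacting all the
remaining racks, each sending `M` elements of `𝔽_{q₁}` (i.e. `M/ℓ` symbols of `𝔽_q`). -/
theorem tamo_barg_multiple_partial_erasure_repair
    (F : Type*) [Field F] [Fintype F]
    (K₁ : Subfield F) (ℓ : ℕ) (hℓ : Nat.card F = Nat.card K₁ ^ ℓ)
    (m m₁ m₂ r δ L : ℕ)
    (hm : m = m₁ + m₂) (hm₁ : 1 ≤ m₁) (hr : 1 ≤ r) (hδ : 2 ≤ δ) (hL : L + 1 = r + δ)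
    (y : Fin m → F) (hy : Function.Injective y)
    (h : F[X]) (hdeg : h.degree = ((L : ℕ) : WithBot ℕ))
    (β : Fin m → Fin L → F)
    (hβinj : ∀ i : Fin m, Function.Injective (β i))
    (hβroot : ∀ (i : Fin m) (j : Fin L), h.eval (β i j) = y i)
    (τ : ℕ) (idx : Fin τ → Fin m) (hidx : StrictMono idx)
    (E : Fin τ → Finset (Fin L)) (hE : ∀ t : Fin τ, δ ≤ (E t).card)
    (hm₂ : Nat.card F * τ ≤ m₂ * Nat.card K₁)
    (M : ℕ) (hM : M = (∑ t : Fin τ, (E t).card) - τ * (δ - 1)) :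
    ∃ φ : (j : {j : Fin m // j ∉ Set.range idx}) → (Fin L → F) → (Fin M → ↥K₁),
    ∃ Φ : ((j : {j : Fin m // j ∉ Set.range idx}) → (Fin M → ↥K₁)) →
          ((t : Fin τ) → ({p : Fin L // p ∉ E t} → F)) →
          ((t : Fin τ) → (↥(E t) → F)),
      ∀ A ∈ TBArrayCode m m₁ L r y h β,
        (fun (t : Fin τ) (p : ↥(E t)) => A (idx t) p.1) =
          Φ (fun j => φ j (A j.1)) (fun t p => A (idx t) p.1) :=
  tamo_barg_multiple_partial_erasure_repair_general F K₁ m m₁ m₂ r δ L hm hm₁ hδ hL y hy h hdeg β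
    hβinj hβroot τ idx E hE hm₂ M hM
end

section
/- Let C be an (N, K, k = Kr; L = r + δ − 1, δ)-RASL code over 𝔽_q in which each column is a repair set with (r, δ)-locality, and let D be an integer with K < D ≤ N − 1. Fix i ∈ [N], a set E_i ⊆ [L] with |E_i| ≥ δ, and a D-subset R ⊆ [N]∖{i}. Then for every repair scheme over 𝔽_q that recovers the erased entries (c_i)|_{E_i} from helper messages together with the surviving entries of column i — i.e., natural numbers (b_t)_{t∈R}, functions φ_t : 𝔽_q^L → 𝔽_q^{b_t} for t ∈ R, and a function Φ with (c_i)|_{E_i} = Φ((φ_t(c_t))_{t∈R}, (c_i)|_{[L]∖E_i}) for every codeword c ∈ C — the total download satisfies Σ_{t∈R} b_t ≥ D·(|E_i| − δ + 1)/(D − K + 1). -/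
/-!
For every set `S` of `D - K + 1` helpers, a codeword is determined by `r` entries of each of
the other `K - 1` helper columns (locality), the surviving entries of column `i`, and the
messages sent by `S`: these data give all messages, hence column `i`, hence `K` whole columns.
Counting, `q ^ (K r) ≤ q ^ ((K - 1) r + (L - |E_i|) + ∑_{t ∈ S} b_t)`, i.e. every such `S`
downloads at least `|E_i| - δ + 1` symbols. Summing over all such `S ⊆ R`, each helper is
counted equally often, which gives the bound.
-/

open Finset

section

variable {ι κ F : Type*}

theorem Finset.sum_powersetCard_sum [DecidableEq ι] {M : Type*} [AddCommMonoid M]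
    (R : Finset ι) {m : ℕ} (hm : 0 < m) (f : ι → M) :
    ∑ S ∈ R.powersetCard m, ∑ t ∈ S, f t = (#R - 1).choose (m - 1) • ∑ t ∈ R, f t := by
  rw [sum_comm' (t' := R) (s' := fun t => {S ∈ R.powersetCard m | {t} ⊆ S})]
  · rw [smul_sum]
    refine sum_congr rfl fun t ht => ?_
    rw [sum_const, card_filter_powersetCard_subset _ _ _ (by simpa using ht)
      (by rwa [card_singleton]), card_singleton]
  · intro S t
    simp only [mem_powersetCard, mem_filter, singleton_subset_iff]
    exact ⟨fun ⟨⟨hSR, hS⟩, ht⟩ => ⟨⟨⟨hSR, hS⟩, ht⟩, hSR ht⟩, fun ⟨h, _⟩ => ⟨h.1, h.2⟩⟩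

theorem Finset.card_mul_le_mul_sum_of_le_sum_powersetCard [DecidableEq ι] {R : Finset ι}
    {m a : ℕ} (hm : 0 < m) (hmR : m ≤ #R) (b : ι → ℕ)
    (h : ∀ S ⊆ R, #S = m → a ≤ ∑ t ∈ S, b t) :
    #R * a ≤ m * ∑ t ∈ R, b t := by
  have hsum : (#R).choose m * a ≤ (#R - 1).choose (m - 1) * ∑ t ∈ R, b t := by
    rw [← smul_eq_mul, ← smul_eq_mul, ← sum_powersetCard_sum R hm, ← card_powersetCard,
      ← sum_const]
    exact sum_le_sum fun S hS => h S (mem_powersetCard.1 hS).1 (mem_powersetCard.1 hS).2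
  have hchoose : #R * (#R - 1).choose (m - 1) = (#R).choose m * m := by
    have := Nat.add_one_mul_choose_eq (#R - 1) (m - 1)
    rwa [Nat.sub_add_cancel (hm.trans_le hmR), Nat.sub_add_cancel hm] at this
  refine Nat.le_of_mul_le_mul_left ?_ (Nat.choose_pos hmR)
  calc (#R).choose m * (#R * a) = #R * ((#R).choose m * a) := by ring
    _ ≤ #R * ((#R - 1).choose (m - 1) * ∑ t ∈ R, b t) := Nat.mul_le_mul_left _ hsum
    _ = (#R).choose m * (m * ∑ t ∈ R, b t) := by rw [← mul_assoc, hchoose, mul_assoc]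

def ColumnsDetermine (C : Set (ι → κ → F)) (K : ℕ) : Prop :=
  ∀ c₁ ∈ C, ∀ c₂ ∈ C, ∀ S : Finset ι, #S = K → (∀ j ∈ S, c₁ j = c₂ j) → c₁ = c₂

def HasColumnLocality (C : Set (ι → κ → F)) (r : ℕ) : Prop :=
  ∀ c₁ ∈ C, ∀ c₂ ∈ C, ∀ j : ι, ∀ T : Finset κ, #T = r →
    (∀ p ∈ T, c₁ j p = c₂ j p) → c₁ j = c₂ j

section PartialRepair

variable [DecidableEq ι] {C : Set (ι → κ → F)} {K r : ℕ} {E : Finset κ} {i : ι}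
  {R S : Finset ι}

theorem eq_of_partialRepair {T : Finset κ} {M : ι → Type*} {φ : (t : ι) → (κ → F) → M t}
    {Φ : ((t : R) → M t) → ({p // p ∉ E} → F) → (E → F)}
    (hMDS : ColumnsDetermine C K) (hloc : HasColumnLocality C r)
    (hT : #T = r) (hiR : i ∉ R) (hRS : #(R \ S) + 1 = K)
    (hΦ : ∀ c ∈ C, (fun p : E => c i p) = Φ (fun t => φ t (c t)) (fun p => c i p))
    {c c' : ι → κ → F} (hc : c ∈ C) (hc' : c' ∈ C)
    (hT_eq : ∀ t ∈ R \ S, ∀ p ∈ T, c t p = c' t p) (hcompl_eq : ∀ p ∉ E, c i p = c' i p)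
    (hS_eq : ∀ t ∈ S, φ t (c t) = φ t (c' t)) : c = c' := by
  have hcols : ∀ t ∈ R \ S, c t = c' t := fun t ht => hloc c hc c' hc' t T hT (hT_eq t ht)
  have hmsg : (fun t : R => φ t (c t)) = fun t : R => φ t (c' t) := by
    funext ⟨t, htR⟩
    by_cases htS : t ∈ S
    · exact hS_eq t htS
    · rw [hcols t (mem_sdiff.2 ⟨htR, htS⟩)]
  have hE : (fun p : E => c i p) = fun p : E => c' i p := by
    rw [hΦ c hc, hΦ c' hc', hmsg]
    congr 1
    funext ⟨p, hp⟩
    exact hcompl_eq p hp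
  have hi : c i = c' i := by
    funext p
    by_cases hp : p ∈ E
    · exact congrFun hE ⟨p, hp⟩
    · exact hcompl_eq p hp
  have hi_notMem : i ∉ R \ S := fun h => hiR (mem_sdiff.1 h).1
  refine hMDS c hc c' hc' (insert i (R \ S)) (by rw [card_insert_of_notMem hi_notMem, hRS]) ?_
  intro j hj
  rcases mem_insert.1 hj with rfl | hj
  · exact hi
  · exact hcols j hj

theorem card_add_le_card_add_sum_of_partialRepair [Fintype κ] [Fintype F] [Nontrivial F]
    {b : ι → ℕ} {φ : (t : ι) → (κ → F) → (Fin (b t) → F)}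
    {Φ : ((t : R) → Fin (b t) → F) → ({p // p ∉ E} → F) → (E → F)}
    (hMDS : ColumnsDetermine C K) (hloc : HasColumnLocality C r)
    (hcard : Nat.card C = Fintype.card F ^ (K * r)) (hr : r ≤ Fintype.card κ)
    (hiR : i ∉ R) (hRS : #(R \ S) + 1 = K)
    (hΦ : ∀ c ∈ C, (fun p : E => c i p) = Φ (fun t => φ t (c t)) (fun p => c i p)) :
    #E + r ≤ Fintype.card κ + ∑ t ∈ S, b t := by
  classical
  obtain ⟨T, -, hT⟩ := exists_subset_card_eq (s := (univ : Finset κ)) (n := r) (by simpa using hr)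
  let f (c : C) : ((R \ S : Finset ι) → T → F) × ({p // p ∉ E} → F) × ((t : S) → Fin (b t) → F) :=
    (fun t p => c.1 t p, fun p => c.1 i p, fun t => φ t (c.1 t))
  have hf : Function.Injective f := by
    rintro ⟨c, hc⟩ ⟨c', hc'⟩ h
    simp only [f, Prod.mk.injEq, funext_iff] at h
    obtain ⟨hT_eq, hcompl_eq, hS_eq⟩ := h
    exact Subtype.ext <| eq_of_partialRepair hMDS hloc hT hiR hRS hΦ hc hc'
      (fun t ht p hp => hT_eq ⟨t, ht⟩ ⟨p, hp⟩) (fun p hp => hcompl_eq ⟨p, hp⟩)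
      (fun t ht => funext (hS_eq ⟨t, ht⟩))
  have hle := Nat.card_le_card_of_injective f hf
  simp only [Nat.card_eq_fintype_card, Fintype.card_prod, Fintype.card_fun, Fintype.card_pi,
    Fintype.card_coe, Fintype.card_subtype_compl, Fintype.card_fin, hT, hcard,
    prod_pow_eq_pow_sum, sum_coe_sort, ← pow_mul, ← pow_add] at hle
  have hexp := (Nat.pow_le_pow_iff_right Fintype.one_lt_card).1 hle
  rw [← hRS, add_one_mul, mul_comm] at hexp
  have := card_le_univ E
  omega

end PartialRepair

end

theorem rasl_partial_repair_cut_set_bound_general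
    (F : Type*) [Field F] [Fintype F]
    (N K r δ L D : ℕ)
    (hrL : r < L) (hL : L + 1 = r + δ)
    (hK : 1 ≤ K) (hKD : K < D)
    (C : Set (Fin N → Fin L → F))
    (hcard : Nat.card C = Fintype.card F ^ (K * r))
    (hMDS : ∀ c₁ ∈ C, ∀ c₂ ∈ C, ∀ S : Finset (Fin N), S.card = K →
      (∀ j ∈ S, c₁ j = c₂ j) → c₁ = c₂)
    (hloc : ∀ c₁ ∈ C, ∀ c₂ ∈ C, ∀ j : Fin N, ∀ T : Finset (Fin L), T.card = r →
      (∀ p ∈ T, c₁ j p = c₂ j p) → c₁ j = c₂ j)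
    (i : Fin N) (Ei : Finset (Fin L)) (hEi : δ ≤ Ei.card)
    (R : Finset (Fin N)) (hR : R.card = D) (hiR : i ∉ R) :
    ∀ b : Fin N → ℕ,
    ∀ φ : (t : Fin N) → (Fin L → F) → (Fin (b t) → F),
    ∀ Φ : ((t : ↥R) → (Fin (b (t : Fin N)) → F)) →
          ({p : Fin L // p ∉ Ei} → F) → (↥Ei → F),
      (∀ c ∈ C, (fun p : ↥Ei => c i p.1) =
        Φ (fun t => φ t (c (t : Fin N))) (fun p => c i p.1)) →
      (D : ℚ) * ((Ei.card - δ + 1 : ℕ) : ℚ) / ((D : ℚ) - (K : ℚ) + 1) ≤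
        ∑ t ∈ R, (b t : ℚ) := by
  intro b φ Φ hΦ
  have hdownload : ∀ S ⊆ R, #S = D - K + 1 → #Ei - δ + 1 ≤ ∑ t ∈ S, b t := by
    intro S hSR hS
    have hRS : #(R \ S) + 1 = K := by rw [card_sdiff_of_subset hSR, hR, hS]; omega
    have := card_add_le_card_add_sum_of_partialRepair hMDS hloc hcard (by simpa using hrL.le) hiR hRS hΦ
    rw [Fintype.card_fin] at this
    omega
  have havg := card_mul_le_mul_sum_of_le_sum_powersetCard (by omega) (by omega) b hdownload
  rw [hR] at havg
  have hm : ((D - K + 1 : ℕ) : ℚ) = D - K + 1 := by push_cast [Nat.cast_sub hKD.le]; ring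
  rw [← hm, div_le_iff₀ (by positivity)]
  exact_mod_cast havg.trans_eq (mul_comm _ _)

/-- Corollary 4 of the paper: cut-set bound for partial repair. For an
`(N, K, k = Kr; L = r + δ - 1, δ)`-RASL code in which each column is a repair set with
`(r, δ)`-locality, `K < D ≤ N - 1`, and an erasure pattern `E_i ⊆ [L]` with `|E_i| ≥ δ`
in column `i`, any repair scheme recovering `(c_i)|_{E_i}` from `D` helper columns
together with the surviving entries of column `i` has total download at least
`D·(|E_i| - δ + 1)/(D - K + 1)`. -/
theorem rasl_partial_repair_cut_set_bound
    (F : Type*) [Field F] [Fintype F]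
    (N K r δ L D : ℕ)
    (hr0 : 0 < r) (hrL : r < L) (hL : L + 1 = r + δ)
    (hK : 1 ≤ K) (hKD : K < D) (hDN : D < N)
    (C : Set (Fin N → Fin L → F))
    (hcard : Nat.card C = Fintype.card F ^ (K * r))
    (hMDS : ∀ c₁ ∈ C, ∀ c₂ ∈ C, ∀ S : Finset (Fin N), S.card = K →
      (∀ j ∈ S, c₁ j = c₂ j) → c₁ = c₂)
    (hloc : ∀ c₁ ∈ C, ∀ c₂ ∈ C, ∀ j : Fin N, ∀ T : Finset (Fin L), T.card = r →
      (∀ p ∈ T, c₁ j p = c₂ j p) → c₁ j = c₂ j)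
    (i : Fin N) (Ei : Finset (Fin L)) (hEi : δ ≤ Ei.card)
    (R : Finset (Fin N)) (hR : R.card = D) (hiR : i ∉ R) :
    ∀ b : Fin N → ℕ,
    ∀ φ : (t : Fin N) → (Fin L → F) → (Fin (b t) → F),
    ∀ Φ : ((t : ↥R) → (Fin (b (t : Fin N)) → F)) →
          ({p : Fin L // p ∉ Ei} → F) → (↥Ei → F),
      (∀ c ∈ C, (fun p : ↥Ei => c i p.1) =
        Φ (fun t => φ t (c (t : Fin N))) (fun p => c i p.1)) →
      (D : ℚ) * ((Ei.card - δ + 1 : ℕ) : ℚ) / ((D : ℚ) - (K : ℚ) + 1) ≤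
        ∑ t ∈ R, (b t : ℚ) :=
  rasl_partial_repair_cut_set_bound_general F N K r δ L D hrL hL hK hKD C hcard hMDS hloc i Ei hEi R
    hR hiR
end
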